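/- arXiv:1803.06074 — 10 statements merged into one kernel-verified Lean document; each statement's English description precedes it below -/
import Mathlib

section
/- Let G be a simple graph and let E_s, E_t ⊆ E(G) be edge subsets each forming a complete graph on k ≥ 3 vertices. Then there exists a reconfiguration sequence under the TJ rule from E_s to E_t in which every edge subset forms a complete graph if and only if E_s = E_t. -/
namespace Stmt3

variable {V : Type*}

/-- The set of endpoints of edges in `E'`: the vertex set of the subgraph formed by `E'`. -/
def eSupp (E' : Set (Sym2 V)) : Set V := {v | ∃ e ∈ E', v ∈ e}

/-- `E' ⊆ E(G)` and the subgraph formed by `E'` is a complete graph: every two distinct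
vertices of the formed subgraph are adjacent in it. -/
def FormsComplete (G : SimpleGraph V) (E' : Set (Sym2 V)) : Prop :=
  E' ⊆ G.edgeSet ∧ ∀ u ∈ eSupp E', ∀ v ∈ eSupp E', u ≠ v → s(u, v) ∈ E'

/-- A single token-jumping (TJ) step on edge subsets of `G`. -/
def TJStepE (G : SimpleGraph V) (E1 E2 : Set (Sym2 V)) : Prop :=
  ∃ em ep, em ∈ E1 ∧ ep ∈ G.edgeSet ∧ ep ∉ E1 ∧ E2 = (E1 \ {em}) ∪ {ep}

/-- There is a reconfiguration sequence under the TJ rule from `Es` to `Et` in which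
every edge subset satisfies the property `P`. -/
def TJReachE (G : SimpleGraph V) (P : Set (Sym2 V) → Prop) (Es Et : Set (Sym2 V)) : Prop :=
  ∃ (l : ℕ) (f : ℕ → Set (Sym2 V)), f 0 = Es ∧ f l = Et ∧
    (∀ k ≤ l, P (f k)) ∧ ∀ k < l, TJStepE G (f k) (f (k + 1))

lemma no_step [Fintype V] (G : SimpleGraph V) (E1 E2 : Set (Sym2 V))
    (h1 : FormsComplete G E1) (h1card : 3 ≤ (eSupp E1).ncard)
    (h2 : FormsComplete G E2) (hstep : TJStepE G E1 E2) : False := by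
  classical
  obtain ⟨em, ep, hem, hepG, hep, hE2⟩ := hstep
  induction em using Sym2.ind with
  | _ a b =>
  -- a, b ∈ eSupp E1
  have ha : a ∈ eSupp E1 := ⟨s(a,b), hem, Sym2.mem_mk_left a b⟩
  have hb : b ∈ eSupp E1 := ⟨s(a,b), hem, Sym2.mem_mk_right a b⟩
  have hab : a ≠ b := (G.mem_edgeSet.mp (h1.1 hem)).ne
  -- eSupp E1 ⊆ eSupp E2
  have hsub : eSupp E1 ⊆ eSupp E2 := by
    intro v hv
    set c : V := if v = a then b else a with hc
    have hne : (eSupp E1 \ {v, c}).Nonempty := by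
      rw [Set.nonempty_iff_ne_empty]
      intro h
      rw [Set.diff_eq_empty] at h
      have h1 := Set.ncard_le_ncard h (Set.toFinite _)
      have h2 : ({v, c} : Set V).ncard ≤ 2 := by
        refine le_trans (Set.ncard_insert_le _ _) ?_
        simp
      omega
    obtain ⟨w, hw, hwni⟩ := hne
    simp only [Set.mem_insert_iff, Set.mem_singleton_iff, not_or] at hwni
    have hvw : s(v, w) ∈ E1 := h1.2 v hv w hw (fun h => hwni.1 h.symm)
    have hne' : s(v, w) ≠ s(a, b) := by
      intro h
      rw [Sym2.eq_iff] at h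
      rcases h with ⟨hva, hwb⟩ | ⟨hvb, hwa⟩
      · exact hwni.2 (by rw [hwb, hc, if_pos hva])
      · by_cases hva : v = a
        · exact hwni.1 (by rw [hwa, ← hva])
        · exact hwni.2 (by rw [hwa, hc, if_neg hva])
    exact ⟨s(v, w), by rw [hE2]; exact Or.inl ⟨hvw, hne'⟩, Sym2.mem_mk_left v w⟩
  -- then s(a,b) ∈ E2, which is impossible
  have hmem : s(a, b) ∈ E2 := h2.2 a (hsub ha) b (hsub hb) hab
  rw [hE2] at hmem
  rcases hmem with ⟨_, h⟩ | h
  · exact h rfl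
  · exact hep (h ▸ hem)

theorem stmt3 [Fintype V] (G : SimpleGraph V) (Es Et : Set (Sym2 V)) (k : ℕ) (hk : 3 ≤ k)
    (hs : FormsComplete G Es) (hscard : (eSupp Es).ncard = k)
    (ht : FormsComplete G Et) (htcard : (eSupp Et).ncard = k) :
    TJReachE G (FormsComplete G) Es Et ↔ Es = Et := by
  constructor
  · rintro ⟨l, f, h0, hl, hP, hstep⟩
    rcases Nat.eq_zero_or_pos l with rfl | hpos
    · rw [← h0, hl]
    · exact absurd (hstep 0 hpos) (fun h => no_step G (f 0) (f 1)
        (h0 ▸ hs) (h0 ▸ hscard ▸ hk) (hP 1 hpos) h)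
  · rintro rfl
    exact ⟨0, fun _ => Es, rfl, rfl, fun _ _ => hs, fun k h => absurd h (Nat.not_lt_zero k)⟩

end Stmt3
end

section
/- Let i, j ≥ 2 be integers, let G be a simple graph, and let E' ⊆ E(G) be an edge subset such that the subgraph formed by E' is an (i,j)-biclique. Then for every edge e⁻ ∈ E' and every edge e⁺ ∈ E(G) with e⁺ ≠ e⁻, the subgraph formed by (E' \ {e⁻}) ∪ {e⁺} is not an (i,j)-biclique. -/
namespace Stmt4

variable {V : Type*}

/-- The set of endpoints of edges in `E'`: the vertex set of the subgraph formed by `E'`. -/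
def eSupp (E' : Set (Sym2 V)) : Set V := {v | ∃ e ∈ E', v ∈ e}

/-- `E' ⊆ E(G)` and the subgraph formed by `E'` is an `(i,j)`-biclique: a complete bipartite
graph whose bipartition consists of one part of `i` vertices and one part of `j` vertices. -/
def FormsBiclique (G : SimpleGraph V) (i j : ℕ) (E' : Set (Sym2 V)) : Prop :=
  E' ⊆ G.edgeSet ∧ ∃ A B : Set V, Disjoint A B ∧ A.ncard = i ∧ B.ncard = j ∧
    A ∪ B = eSupp E' ∧
    ∀ u v : V, s(u, v) ∈ E' ↔ (u ∈ A ∧ v ∈ B) ∨ (u ∈ B ∧ v ∈ A)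

theorem stmt4 [Fintype V] (i j : ℕ) (hi : 2 ≤ i) (hj : 2 ≤ j)
    (G : SimpleGraph V) (E' : Set (Sym2 V)) (hbic : FormsBiclique G i j E')
    (em ep : Sym2 V) (hem : em ∈ E') (hep : ep ∈ G.edgeSet) (hne : ep ≠ em) :
    ¬ FormsBiclique G i j ((E' \ {em}) ∪ {ep}) := by
  obtain ⟨hEsub, A, B, hdisj, hAcard, hBcard, hsupp, hchar⟩ := hbic
  rintro ⟨hFsub, A', B', hdisj', hA'card, hB'card, hsupp', hchar'⟩
  obtain ⟨a0, b0, ha0, hb0, heq⟩ : ∃ a0 b0, a0 ∈ A ∧ b0 ∈ B ∧ em = s(a0, b0) := by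
    induction em using Sym2.ind with
    | _ u v =>
      rcases (hchar u v).mp hem with ⟨hu, hv⟩ | ⟨hu, hv⟩
      · exact ⟨u, v, hu, hv, rfl⟩
      · exact ⟨v, u, hv, hu, Sym2.eq_swap⟩
  -- em is not in the new edge set
  have hemnot : em ∉ (E' \ {em}) ∪ {ep} := by
    rintro (⟨-, h⟩ | h)
    · exact h rfl
    · exact hne (Set.mem_singleton_iff.mp h).symm
  -- edges of the old biclique avoiding (a0,b0) are in the new edge set
  have hkey : ∀ a ∈ A, ∀ b ∈ B, (a ≠ a0 ∨ b ≠ b0) → s(a, b) ∈ (E' \ {em}) ∪ {ep} := by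
    intro a ha b hb hor
    left
    refine ⟨(hchar a b).mpr (Or.inl ⟨ha, hb⟩), ?_⟩
    intro hcon
    rw [Set.mem_singleton_iff, heq, Sym2.eq_iff] at hcon
    rcases hcon with ⟨h1, h2⟩ | ⟨h1, h2⟩
    · rcases hor with h | h
      · exact h h1
      · exact h h2
    · exact Set.disjoint_left.mp hdisj ha (h1 ▸ hb0)
  obtain ⟨a1, ha1, ha1ne⟩ := Set.exists_ne_of_one_lt_ncard (by omega : 1 < A.ncard) a0
  obtain ⟨b1, hb1, hb1ne⟩ := Set.exists_ne_of_one_lt_ncard (by omega : 1 < B.ncard) b0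
  have ha1supp : a1 ∈ A' ∪ B' := by
    rw [hsupp']
    exact ⟨s(a1, b0), hkey a1 ha1 b0 hb0 (Or.inl ha1ne), Sym2.mem_mk_left _ _⟩
  rcases ha1supp with hA1 | hB1
  · -- a1 ∈ A' : then B ⊆ B', A ⊆ A'
    have hBB' : B ⊆ B' := by
      intro b hb
      rcases (hchar' a1 b).mp (hkey a1 ha1 b hb (Or.inl ha1ne)) with ⟨-, h⟩ | ⟨h, -⟩
      · exact h
      · exact absurd h (Set.disjoint_left.mp hdisj' hA1)
    have hb1' : b1 ∈ B' := hBB' hb1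
    have hAA' : A ⊆ A' := by
      intro a ha
      rcases (hchar' a b1).mp (hkey a ha b1 hb1 (Or.inr hb1ne)) with ⟨h, -⟩ | ⟨-, h⟩
      · exact h
      · exact absurd h (Set.disjoint_right.mp hdisj' hb1')
    have hAeq : A = A' := Set.eq_of_subset_of_ncard_le hAA'
      (by rw [hAcard, hA'card]) (Set.toFinite _)
    have hBeq : B = B' := Set.eq_of_subset_of_ncard_le hBB'
      (by rw [hBcard, hB'card]) (Set.toFinite _)
    have : s(a0, b0) ∈ (E' \ {em}) ∪ {ep} :=
      (hchar' a0 b0).mpr (Or.inl ⟨hAeq ▸ ha0, hBeq ▸ hb0⟩)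
    rw [← heq] at this; exact hemnot this
  · -- a1 ∈ B' : then B ⊆ A', A ⊆ B'
    have hBA' : B ⊆ A' := by
      intro b hb
      rcases (hchar' a1 b).mp (hkey a1 ha1 b hb (Or.inl ha1ne)) with ⟨h, -⟩ | ⟨-, h⟩
      · exact absurd hB1 (Set.disjoint_left.mp hdisj' h)
      · exact h
    have hb1' : b1 ∈ A' := hBA' hb1
    have hAB' : A ⊆ B' := by
      intro a ha
      rcases (hchar' a b1).mp (hkey a ha b1 hb1 (Or.inr hb1ne)) with ⟨-, h⟩ | ⟨h, -⟩
      · exact absurd hb1' (Set.disjoint_right.mp hdisj' h)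
      · exact h
    have hji : j ≤ i := by
      have := Set.ncard_le_ncard hBA' (Set.toFinite _)
      omega
    have hij : i ≤ j := by
      have := Set.ncard_le_ncard hAB' (Set.toFinite _)
      omega
    have hBeq : B = A' := Set.eq_of_subset_of_ncard_le hBA'
      (by rw [hBcard, hA'card]; omega) (Set.toFinite _)
    have hAeq : A = B' := Set.eq_of_subset_of_ncard_le hAB'
      (by rw [hAcard, hB'card]; omega) (Set.toFinite _)
    have : s(a0, b0) ∈ (E' \ {em}) ∪ {ep} :=
      (hchar' a0 b0).mpr (Or.inr ⟨hAeq ▸ ha0, hBeq ▸ hb0⟩)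
    rw [← heq] at this; exact hemnot this

end Stmt4
end

section
/- Let i, j ≥ 2 be integers, let G be a simple graph, and let E_s, E_t ⊆ E(G) be edge subsets each forming an (i,j)-biclique. Then there exists a reconfiguration sequence under the TJ rule from E_s to E_t in which every edge subset forms an (i,j)-biclique if and only if E_s = E_t. -/
namespace Stmt5

variable {V : Type*}

/-- The set of endpoints of edges in `E'`: the vertex set of the subgraph formed by `E'`. -/
def eSupp (E' : Set (Sym2 V)) : Set V := {v | ∃ e ∈ E', v ∈ e}

/-- `E' ⊆ E(G)` and the subgraph formed by `E'` is an `(i,j)`-biclique: a complete bipartite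
graph whose bipartition consists of one part of `i` vertices and one part of `j` vertices. -/
def FormsBiclique (G : SimpleGraph V) (i j : ℕ) (E' : Set (Sym2 V)) : Prop :=
  E' ⊆ G.edgeSet ∧ ∃ A B : Set V, Disjoint A B ∧ A.ncard = i ∧ B.ncard = j ∧
    A ∪ B = eSupp E' ∧
    ∀ u v : V, s(u, v) ∈ E' ↔ (u ∈ A ∧ v ∈ B) ∨ (u ∈ B ∧ v ∈ A)

/-- A single token-jumping (TJ) step on edge subsets of `G`. -/
def TJStepE (G : SimpleGraph V) (E1 E2 : Set (Sym2 V)) : Prop :=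
  ∃ em ep, em ∈ E1 ∧ ep ∈ G.edgeSet ∧ ep ∉ E1 ∧ E2 = (E1 \ {em}) ∪ {ep}

/-- There is a reconfiguration sequence under the TJ rule from `Es` to `Et` in which
every edge subset satisfies the property `P`. -/
def TJReachE (G : SimpleGraph V) (P : Set (Sym2 V) → Prop) (Es Et : Set (Sym2 V)) : Prop :=
  ∃ (l : ℕ) (f : ℕ → Set (Sym2 V)), f 0 = Es ∧ f l = Et ∧
    (∀ k ≤ l, P (f k)) ∧ ∀ k < l, TJStepE G (f k) (f (k + 1))

lemma exists_ne_mem [Fintype V] {s : Set V} {a : V} (h : 2 ≤ s.ncard) (ha : a ∈ s) :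
    ∃ b ∈ s, b ≠ a := by
  have hfin : s.Finite := Set.toFinite s
  rcases (Set.one_lt_ncard_iff hfin).mp h with ⟨x, y, hx, hy, hxy⟩
  by_cases hxa : x = a
  · refine ⟨y, hy, ?_⟩
    rintro rfl
    exact hxy hxa
  · exact ⟨x, hx, hxa⟩

lemma FormsBiclique.symm {G : SimpleGraph V} {i j : ℕ} {E : Set (Sym2 V)}
    (h : FormsBiclique G i j E) : FormsBiclique G j i E := by
  obtain ⟨hE, A, B, hAB, hA, hB, hsupp, hiff⟩ := h
  exact ⟨hE, B, A, hAB.symm, hB, hA, by rw [Set.union_comm]; exact hsupp,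
    fun u v => (hiff u v).trans or_comm⟩

lemma key_aux [Fintype V] {G : SimpleGraph V} {i j : ℕ} (hi : 2 ≤ i) (hj : 2 ≤ j)
    {E1 E2 : Set (Sym2 V)} {A B : Set V} {a b : V}
    (hAB : Disjoint A B) (hA : A.ncard = i) (hB : B.ncard = j)
    (hiff : ∀ u v : V, s(u, v) ∈ E1 ↔ (u ∈ A ∧ v ∈ B) ∨ (u ∈ B ∧ v ∈ A))
    (ha : a ∈ A) (hb : b ∈ B)
    (h2 : FormsBiclique G i j E2)
    (hsub : E1 \ {s(a, b)} ⊆ E2) : s(a, b) ∈ E2 := by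
  obtain ⟨a', ha', haa⟩ := exists_ne_mem (hA ▸ hi) ha
  obtain ⟨b', hb', hbb⟩ := exists_ne_mem (hB ▸ hj) hb
  obtain ⟨-, A', B', hAB', -, -, -, hiff'⟩ := h2
  have hdj : ∀ x, x ∈ A → x ∉ B := fun x hx => Set.disjoint_left.mp hAB hx
  have hdj' : ∀ x, x ∈ A' → x ∉ B' := fun x hx => Set.disjoint_left.mp hAB' hx
  have e1 : s(a', b') ∈ E2 := by
    refine hsub ⟨(hiff a' b').mpr (Or.inl ⟨ha', hb'⟩), ?_⟩
    rw [Set.mem_singleton_iff, Sym2.eq_iff]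
    rintro (⟨h1, -⟩ | ⟨h1, -⟩)
    · exact haa h1
    · exact hdj a' ha' (h1 ▸ hb)
  have e2 : s(a, b') ∈ E2 := by
    refine hsub ⟨(hiff a b').mpr (Or.inl ⟨ha, hb'⟩), ?_⟩
    rw [Set.mem_singleton_iff, Sym2.eq_iff]
    rintro (⟨-, h2'⟩ | ⟨h1, -⟩)
    · exact hbb h2'
    · exact hdj a ha (h1 ▸ hb)
  have e3 : s(a', b) ∈ E2 := by
    refine hsub ⟨(hiff a' b).mpr (Or.inl ⟨ha', hb⟩), ?_⟩
    rw [Set.mem_singleton_iff, Sym2.eq_iff]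
    rintro (⟨h1, -⟩ | ⟨h1, -⟩)
    · exact haa h1
    · exact hdj a' ha' (h1 ▸ hb)
  rcases (hiff' a' b').mp e1 with ⟨ha'', hb''⟩ | ⟨ha'', hb''⟩
  · have haA : a ∈ A' := by
      rcases (hiff' a b').mp e2 with ⟨h, -⟩ | ⟨-, h⟩
      · exact h
      · exact absurd hb'' (hdj' b' h)
    have hbB : b ∈ B' := by
      rcases (hiff' a' b).mp e3 with ⟨-, h⟩ | ⟨h, -⟩
      · exact h
      · exact absurd h (hdj' a' ha'')
    exact (hiff' a b).mpr (Or.inl ⟨haA, hbB⟩)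
  · have haB : a ∈ B' := by
      rcases (hiff' a b').mp e2 with ⟨-, h⟩ | ⟨h, -⟩
      · exact absurd h (hdj' b' hb'')
      · exact h
    have hbA : b ∈ A' := by
      rcases (hiff' a' b).mp e3 with ⟨h, -⟩ | ⟨-, h⟩
      · exact absurd ha'' (hdj' a' h)
      · exact h
    exact (hiff' a b).mpr (Or.inr ⟨haB, hbA⟩)

lemma key [Fintype V] {G : SimpleGraph V} {i j : ℕ} (hi : 2 ≤ i) (hj : 2 ≤ j)
    {E1 E2 : Set (Sym2 V)} {em : Sym2 V}
    (h1 : FormsBiclique G i j E1) (h2 : FormsBiclique G i j E2)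
    (hm : em ∈ E1) (hsub : E1 \ {em} ⊆ E2) : em ∈ E2 := by
  obtain ⟨a, b, rfl⟩ : ∃ a b, em = s(a, b) := by
    induction em using Sym2.ind with
    | _ x y => exact ⟨x, y, rfl⟩
  obtain ⟨-, A, B, hAB, hA, hB, -, hiff⟩ := h1
  rcases (hiff a b).mp hm with ⟨ha, hb⟩ | ⟨ha, hb⟩
  · exact key_aux hi hj hAB hA hB hiff ha hb h2 hsub
  · exact key_aux hj hi hAB.symm hB hA
      (fun u v => (hiff u v).trans or_comm) ha hb h2.symm hsub

theorem stmt5 [Fintype V] (i j : ℕ) (hi : 2 ≤ i) (hj : 2 ≤ j)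
    (G : SimpleGraph V) (Es Et : Set (Sym2 V))
    (hs : FormsBiclique G i j Es) (ht : FormsBiclique G i j Et) :
    TJReachE G (FormsBiclique G i j) Es Et ↔ Es = Et := by
  constructor
  · rintro ⟨l, f, h0, hl, hP, hstep⟩
    rcases Nat.eq_zero_or_pos l with rfl | hpos
    · rw [← h0, ← hl]
    · exfalso
      obtain ⟨em, ep, hm, hpG, hpn, heq⟩ := hstep 0 hpos
      have h1 : FormsBiclique G i j (f 0) := hP 0 (Nat.zero_le _)
      have h2 : FormsBiclique G i j (f 1) := hP 1 hpos
      have hsub : f 0 \ {em} ⊆ f 1 := by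
        rw [show (1 : ℕ) = 0 + 1 from rfl, heq]
        exact Set.subset_union_left
      have hmem := key hi hj h1 h2 hm hsub
      rw [show (1 : ℕ) = 0 + 1 from rfl, heq] at hmem
      rcases hmem with ⟨-, hne⟩ | he
      · exact hne rfl
      · exact hpn (Set.mem_singleton_iff.mp he ▸ hm)
  · rintro rfl
    exact ⟨0, fun _ => Es, rfl, rfl, fun k _ => hs, fun k hk => absurd hk (Nat.not_lt_zero k)⟩

end Stmt5
end

section
/- Let j ≥ 3 be an integer, let G be a simple graph, and let E_s, E_t ⊆ E(G) be edge subsets each forming a star with j leaves, with centers c_s and c_t respectively. Then there exists a reconfiguration sequence under the TJ rule from E_s to E_t in which every edge subset forms a star with j leaves if and only if c_s = c_t. -/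
/-!
Every edge of a star contains its center, and the only edge through two distinct vertices
`c`, `c'` is `s(c, c')`; hence two stars sharing at least two edges have the same center. A TJ step
keeps `j - 1 ≥ 2` edges of a star, so the center is invariant along a reconfiguration sequence.
Conversely, for a fixed center, replacing the edge to a leaf of `Es` that is not a leaf of `Et`
by the edge to a leaf of `Et` that is not a leaf of `Es` is a TJ step between stars, and it
decreases the number of such leaves.
-/

namespace Stmt7

variable {V : Type*}

/-- `E' ⊆ E(G)` and the subgraph formed by `E'` is a star `K_{1,j}` with `j` leaves
whose center is `c`: its edges are exactly the edges joining `c` to each of `j` leaves. -/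
def FormsStar (G : SimpleGraph V) (j : ℕ) (c : V) (E' : Set (Sym2 V)) : Prop :=
  E' ⊆ G.edgeSet ∧ ∃ Lv : Set V, Lv.ncard = j ∧ c ∉ Lv ∧
    ∀ e, e ∈ E' ↔ ∃ v ∈ Lv, e = s(c, v)

/-- A single token-jumping (TJ) step on edge subsets of `G`. -/
def TJStepE (G : SimpleGraph V) (E1 E2 : Set (Sym2 V)) : Prop :=
  ∃ em ep, em ∈ E1 ∧ ep ∈ G.edgeSet ∧ ep ∉ E1 ∧ E2 = (E1 \ {em}) ∪ {ep}

/-- There is a reconfiguration sequence under the TJ rule from `Es` to `Et` in which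
every edge subset satisfies the property `P`. -/
def TJReachE (G : SimpleGraph V) (P : Set (Sym2 V) → Prop) (Es Et : Set (Sym2 V)) : Prop :=
  ∃ (l : ℕ) (f : ℕ → Set (Sym2 V)), f 0 = Es ∧ f l = Et ∧
    (∀ k ≤ l, P (f k)) ∧ ∀ k < l, TJStepE G (f k) (f (k + 1))

section Reachability

variable {G : SimpleGraph V} {P : Set (Sym2 V) → Prop}

theorem TJReachE.refl {E : Set (Sym2 V)} (hE : P E) : TJReachE G P E E :=
  ⟨0, fun _ => E, rfl, rfl, fun _ _ => hE, fun _ hk => absurd hk (Nat.not_lt_zero _)⟩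

theorem TJReachE.head {E₁ E₂ E₃ : Set (Sym2 V)} (h₁ : P E₁) (hstep : TJStepE G E₁ E₂)
    (h : TJReachE G P E₂ E₃) : TJReachE G P E₁ E₃ := by
  obtain ⟨l, f, h0, hl, hP, hf⟩ := h
  refine ⟨l + 1, fun | 0 => E₁ | k + 1 => f k, rfl, hl, ?_, ?_⟩
  · rintro (_ | k) hk
    exacts [h₁, hP k (by omega)]
  · rintro (_ | k) hk
    · show TJStepE G E₁ (f 0)
      exact h0 ▸ hstep
    · exact hf k (by omega)

theorem TJReachE.invariant {Q : Set (Sym2 V) → Prop} {Es Et : Set (Sym2 V)}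
    (h : TJReachE G P Es Et) (hs : Q Es)
    (hstep : ∀ A B, Q A → P B → TJStepE G A B → Q B) : Q Et := by
  obtain ⟨l, f, h0, rfl, hP, hf⟩ := h
  have hQ : ∀ k ≤ l, Q (f k) := by
    intro k hk
    induction k with
    | zero => exact h0 ▸ hs
    | succ k ih => exact hstep _ _ (ih (by omega)) (hP _ hk) (hf k hk)
  exact hQ l le_rfl

end Reachability

section Star

variable {G : SimpleGraph V} {j : ℕ} {c : V} {E : Set (Sym2 V)}

theorem formsStar_iff : FormsStar G j c E ↔
    E ⊆ G.edgeSet ∧ ∃ L : Set V, L.ncard = j ∧ c ∉ L ∧ E = Sym2.mkEmbedding c '' L := by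
  simp only [FormsStar, Set.ext_iff, Set.mem_image, Sym2.mkEmbedding_apply, eq_comm (a := s(c, _))]

theorem FormsStar.center_mem (h : FormsStar G j c E) {e : Sym2 V} (he : e ∈ E) : c ∈ e := by
  obtain ⟨-, L, -, -, hE⟩ := h
  obtain ⟨v, -, rfl⟩ := (hE e).1 he
  exact Sym2.mem_mk_left c v

theorem FormsStar.ncard_eq (h : FormsStar G j c E) : E.ncard = j := by
  obtain ⟨-, L, rfl, -, rfl⟩ := formsStar_iff.1 h
  exact Set.ncard_image_of_injective L (Sym2.mkEmbedding c).injective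

theorem FormsStar.finite (h : FormsStar G j c E) (hj : j ≠ 0) : E.Finite :=
  Set.finite_of_ncard_ne_zero (h.ncard_eq ▸ hj)

theorem FormsStar.center_eq {j₂ : ℕ} {c₂ : V} {E₂ : Set (Sym2 V)} (h : FormsStar G j c E)
    (h₂ : FormsStar G j₂ c₂ E₂) (hE : 1 < (E ∩ E₂).ncard) : c = c₂ := by
  by_contra hne
  have hsub : E ∩ E₂ ⊆ {s(c, c₂)} := fun e he =>
    (Sym2.mem_and_mem_iff hne).1 ⟨h.center_mem he.1, h₂.center_mem he.2⟩
  have := Set.ncard_le_ncard hsub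
  rw [Set.ncard_singleton] at this
  omega

theorem FormsStar.center_unique {c₂ : V} (hj : 2 ≤ j) (h : FormsStar G j c E)
    (h₂ : FormsStar G j c₂ E) : c = c₂ :=
  h.center_eq h₂ (by rw [Set.inter_self, h.ncard_eq]; omega)

theorem FormsStar.center_eq_of_tjStepE {c₂ : V} {E₂ : Set (Sym2 V)} (hj : 3 ≤ j)
    (h : FormsStar G j c E) (h₂ : FormsStar G j c₂ E₂) (hstep : TJStepE G E E₂) :
    c = c₂ := by
  obtain ⟨em, ep, hem, -, -, rfl⟩ := hstep
  have hsub : E \ {em} ⊆ E ∩ (E \ {em} ∪ {ep}) := fun e he => ⟨he.1, Or.inl he⟩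
  refine h.center_eq h₂ ?_
  calc 1 < (E \ {em}).ncard := by rw [Set.ncard_sdiff_singleton_of_mem hem, h.ncard_eq]; omega
    _ ≤ _ := Set.ncard_le_ncard hsub ((h.finite (by omega)).subset Set.inter_subset_left)

end Star

section SameCenter

variable {G : SimpleGraph V} {j : ℕ} {c : V}

theorem tjStepE_image_exchange {L : Set V} {v w : V} (hv : v ∈ L) (hw : w ∉ L)
    (hG : s(c, w) ∈ G.edgeSet) :
    TJStepE G (Sym2.mkEmbedding c '' L) (Sym2.mkEmbedding c '' insert w (L \ {v})) := by
  have hinj := (Sym2.mkEmbedding c).injective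
  refine ⟨s(c, v), s(c, w), Set.mem_image_of_mem _ hv, hG,
    fun h => hw (hinj.mem_set_image.1 h), ?_⟩
  rw [Set.image_insert_eq, Set.image_sdiff hinj, Set.image_singleton, Set.union_singleton]
  rfl

theorem tjReachE_image_of_ncard_eq (hj : j ≠ 0) {L₁ L₂ : Set V} (hL₁ : L₁.ncard = j)
    (hL₂ : L₂.ncard = j) (hc₁ : c ∉ L₁) (hc₂ : c ∉ L₂)
    (hG₁ : Sym2.mkEmbedding c '' L₁ ⊆ G.edgeSet)
    (hG₂ : Sym2.mkEmbedding c '' L₂ ⊆ G.edgeSet) :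
    TJReachE G (fun E => ∃ c, FormsStar G j c E) (Sym2.mkEmbedding c '' L₁)
      (Sym2.mkEmbedding c '' L₂) := by
  have hfin {L : Set V} (hL : L.ncard = j) : L.Finite := Set.finite_of_ncard_ne_zero (hL ▸ hj)
  induction hn : (L₁ \ L₂).ncard generalizing L₁ with
  | zero =>
    have hsub : L₁ ⊆ L₂ := Set.sdiff_eq_empty.1 ((Set.ncard_eq_zero (hfin hL₁).sdiff).1 hn)
    rw [Set.eq_of_subset_of_ncard_le hsub (hL₂.trans hL₁.symm).le (hfin hL₂)]
    exact .refl ⟨c, formsStar_iff.2 ⟨hG₂, L₂, hL₂, hc₂, rfl⟩⟩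
  | succ n ih =>
    obtain ⟨v, hv⟩ := Set.nonempty_of_ncard_ne_zero (s := L₁ \ L₂) (by omega)
    have hn' : (L₂ \ L₁).ncard = n + 1 := hn ▸
      ((Set.ncard_eq_ncard_iff_ncard_sdiff_eq_ncard_sdiff (hfin hL₁) (hfin hL₂)).1
        (hL₁.trans hL₂.symm)).symm
    obtain ⟨w, hw₂, hw₁⟩ := Set.nonempty_of_ncard_ne_zero (s := L₂ \ L₁) (by omega)
    have hGw : s(c, w) ∈ G.edgeSet := hG₂ (Set.mem_image_of_mem _ hw₂)
    refine .head ⟨c, formsStar_iff.2 ⟨hG₁, L₁, hL₁, hc₁, rfl⟩⟩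
      (tjStepE_image_exchange hv.1 hw₁ hGw) (ih ?_ ?_ ?_ ?_)
    · rw [Set.ncard_exchange hw₁ hv.1, hL₁]
    · rintro (rfl | ⟨hc, -⟩)
      exacts [hc₂ hw₂, hc₁ hc]
    · rw [Set.image_insert_eq]
      exact Set.insert_subset_iff.2 ⟨hGw, (Set.image_mono Set.sdiff_subset).trans hG₁⟩
    · rw [Set.insert_sdiff_of_mem _ hw₂, sdiff_right_comm,
        Set.ncard_sdiff_singleton_of_mem hv, hn, Nat.add_sub_cancel]

theorem FormsStar.tjReachE_of_center_eq (hj : j ≠ 0) {E₁ E₂ : Set (Sym2 V)}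
    (h₁ : FormsStar G j c E₁) (h₂ : FormsStar G j c E₂) :
    TJReachE G (fun E => ∃ c, FormsStar G j c E) E₁ E₂ := by
  obtain ⟨hG₁, L₁, hL₁, hc₁, rfl⟩ := formsStar_iff.1 h₁
  obtain ⟨hG₂, L₂, hL₂, hc₂, rfl⟩ := formsStar_iff.1 h₂
  exact tjReachE_image_of_ncard_eq hj hL₁ hL₂ hc₁ hc₂ hG₁ hG₂

end SameCenter

theorem stmt7_general (j : ℕ) (hj : 3 ≤ j) (G : SimpleGraph V)
    (Es Et : Set (Sym2 V)) (cs ct : V)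
    (hs : FormsStar G j cs Es) (ht : FormsStar G j ct Et) :
    TJReachE G (fun E' => ∃ c, FormsStar G j c E') Es Et ↔ cs = ct := by
  constructor
  · intro h
    have hEt : FormsStar G j cs Et := h.invariant hs fun _ _ hA ⟨_, hB⟩ hstep =>
      hA.center_eq_of_tjStepE hj hB hstep ▸ hB
    exact hEt.center_unique (by omega) ht
  · rintro rfl
    exact hs.tjReachE_of_center_eq (by omega) ht

theorem stmt7 [Fintype V] (j : ℕ) (hj : 3 ≤ j) (G : SimpleGraph V)
    (Es Et : Set (Sym2 V)) (cs ct : V)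
    (hs : FormsStar G j cs Es) (ht : FormsStar G j ct Et) :
    TJReachE G (fun E' => ∃ c, FormsStar G j c E') Es Et ↔ cs = ct :=
  stmt7_general j hj G Es Et cs ct hs ht

end Stmt7
end

section
/- Let G be a simple graph and let E_s, E_t ⊆ E(G) be edge subsets with |E_s| = |E_t| ≥ 2 such that each of E_s and E_t forms a tree. Then there exists a reconfiguration sequence under the TJ rule from E_s to E_t in which every edge subset forms a tree if and only if all the edges in E_s and E_t are contained in the same connected component of G. -/
/-!
With at least two edges, consecutive trees of a TJ sequence share an edge, so all of them lie
in one connected component of `G`.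

Conversely, slide `E_s` along a walk of `G` towards `E_t`: each step drops a leaf edge away from
the current vertex and attaches the next edge of the walk. Once the tree `T` meets `E_t` at a
vertex `r`, grow a common subtree `C` of `T` and `E_t`, starting from the one-vertex tree `r`,
by an edge `s(a, x)` of `E_t` leaving `C`. If that edge is not in `T`, it is added and `T` gives
up either an edge outside `C` on the cycle it closes (when `x` is a vertex of `T`), or a leaf edge
away from `C`; such a leaf exists by counting degrees. Trees are handled in counting form:
connected, with one vertex more than edges.
-/

namespace Stmt8

variable {V : Type*}

/-- The set of endpoints of edges in `E'`: the vertex set of the subgraph formed by `E'`. -/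
def eSupp (E' : Set (Sym2 V)) : Set V := {v | ∃ e ∈ E', v ∈ e}

/-- The subgraph formed by `E'`, as a graph on the vertex set `eSupp E'`. -/
def formed (E' : Set (Sym2 V)) : SimpleGraph (eSupp E') :=
  (SimpleGraph.fromEdgeSet E').induce (eSupp E')

/-- `E' ⊆ E(G)` and the subgraph formed by `E'` is a tree (a connected acyclic graph). -/
def FormsTree (G : SimpleGraph V) (E' : Set (Sym2 V)) : Prop :=
  E' ⊆ G.edgeSet ∧ (formed E').IsTree

/-- A single token-jumping (TJ) step on edge subsets of `G`. -/
def TJStepE (G : SimpleGraph V) (E1 E2 : Set (Sym2 V)) : Prop :=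
  ∃ em ep, em ∈ E1 ∧ ep ∈ G.edgeSet ∧ ep ∉ E1 ∧ E2 = (E1 \ {em}) ∪ {ep}

/-- There is a reconfiguration sequence under the TJ rule from `Es` to `Et` in which
every edge subset satisfies the property `P`. -/
def TJReachE (G : SimpleGraph V) (P : Set (Sym2 V) → Prop) (Es Et : Set (Sym2 V)) : Prop :=
  ∃ (l : ℕ) (f : ℕ → Set (Sym2 V)), f 0 = Es ∧ f l = Et ∧
    (∀ k ≤ l, P (f k)) ∧ ∀ k < l, TJStepE G (f k) (f (k + 1))

open SimpleGraph Relation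

section Support

variable {S : Set (Sym2 V)} {K : Set V}

lemma mem_eSupp_of_mem {e : Sym2 V} {v : V} (he : e ∈ S) (hv : v ∈ e) : v ∈ eSupp S :=
  ⟨e, he, hv⟩

lemma eSupp_mono {A B : Set (Sym2 V)} (h : A ⊆ B) : eSupp A ⊆ eSupp B :=
  fun _ ⟨e, he, hv⟩ => ⟨e, h he, hv⟩

lemma eSupp_union (A B : Set (Sym2 V)) : eSupp (A ∪ B) = eSupp A ∪ eSupp B := by
  ext v
  simp [eSupp, or_and_right, exists_or]

lemma eSupp_singleton (a b : V) : eSupp {s(a, b)} = {a, b} := by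
  ext v
  simp [eSupp]

lemma eSupp_nonempty (hS : S.Nonempty) : (eSupp S).Nonempty :=
  let ⟨e, he⟩ := hS
  ⟨e.out.1, mem_eSupp_of_mem he e.out_fst_mem⟩

lemma ncard_exchange [Finite V] {e e' : Sym2 V} (he : e ∈ S) (he' : e' ∉ S) :
    (S \ {e} ∪ {e'}).ncard = S.ncard := by
  rw [Set.union_singleton, Set.ncard_insert_of_notMem fun h => he' h.1,
    Set.ncard_sdiff_singleton_add_one he]

lemma edgeSet_fromEdgeSet_of_forall_not_isDiag (hS : ∀ e ∈ S, ¬ e.IsDiag) :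
    (fromEdgeSet S).edgeSet = S := by
  rw [edgeSet_fromEdgeSet]
  exact (Set.disjoint_left.2 fun e he hd => hS e he (Sym2.mem_diagSet.1 hd)).sdiff_eq_left

lemma mem_of_mem_edges {u v : V} {e : Sym2 V} (p : (fromEdgeSet S).Walk u v)
    (he : e ∈ p.edges) : e ∈ S :=
  (edgeSet_fromEdgeSet S ▸ p.edges_subset_edgeSet he).1

lemma mem_eSupp_of_reachable {u v : V} (h : (fromEdgeSet S).Reachable u v) (huv : u ≠ v) :
    u ∈ eSupp S := by
  obtain ⟨p⟩ := h
  cases p with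
  | nil => exact absurd rfl huv
  | cons hadj _ => exact mem_eSupp_of_mem ((fromEdgeSet_adj _).1 hadj).1 (Sym2.mem_mk_left _ _)

lemma exists_boundary_edge_of_reachable {u v : V} (h : (fromEdgeSet S).Reachable u v)
    (hu : u ∈ K) (hv : v ∉ K) : ∃ a b, s(a, b) ∈ S ∧ a ∈ K ∧ b ∉ K := by
  obtain ⟨p⟩ := h
  obtain ⟨d, -, hd, hd'⟩ := p.exists_boundary_dart K hu hv
  exact ⟨d.fst, d.snd, ((fromEdgeSet_adj _).1 d.adj).1, hd, hd'⟩

lemma reachable_induce_iff (hK : eSupp S ⊆ K) {u v : K} :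
    ((fromEdgeSet S).induce K).Reachable u v ↔ (fromEdgeSet S).Reachable u v := by
  refine ⟨fun h => h.map (Embedding.induce K).toHom, fun ⟨p⟩ => ⟨p.induce K fun x hx => ?_⟩⟩
  rcases Walk.mem_support_iff_exists_mem_edges.1 hx with rfl | ⟨e, he, hxe⟩
  · exact v.2
  · exact hK (mem_eSupp_of_mem (mem_of_mem_edges p he) hxe)

lemma nat_card_edgeSet_induce (hS : ∀ e ∈ S, ¬ e.IsDiag) (hK : eSupp S ⊆ K) :
    Nat.card ((fromEdgeSet S).induce K).edgeSet = S.ncard := by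
  have hsurj : Function.Surjective (Embedding.induce (G := fromEdgeSet S) K).mapEdgeSet := by
    rintro ⟨e, he⟩
    induction e using Sym2.ind with
    | _ a b =>
      have hab : (fromEdgeSet S).Adj a b := he
      have hmem (x) (hx : x ∈ s(a, b)) : x ∈ K :=
        hK (mem_eSupp_of_mem ((fromEdgeSet_adj _).1 hab).1 hx)
      exact ⟨⟨s(⟨a, hmem a (Sym2.mem_mk_left a b)⟩, ⟨b, hmem b (Sym2.mem_mk_right a b)⟩), hab⟩,
        rfl⟩
  rw [Nat.card_congr (Equiv.ofBijective _ ⟨Function.Embedding.injective _, hsurj⟩),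
    Nat.card_coe_set_eq, edgeSet_fromEdgeSet_of_forall_not_isDiag hS]

end Support

lemma reachable_map_of_forall_adj {W : Type*} {G : SimpleGraph V} {H : SimpleGraph W}
    (f : V → W) (h : ∀ a b, G.Adj a b → H.Reachable (f a) (f b)) {u v : V}
    (huv : G.Reachable u v) : H.Reachable (f u) (f v) := by
  rw [reachable_iff_reflTransGen] at huv ⊢
  exact huv.lift' f fun a b hab => (reachable_iff_reflTransGen _ _).1 (h a b hab)

lemma reachable_of_mem_edges_of_isTrail {G H : SimpleGraph V} {u v c d : V}
    (p : G.Walk u v) (hp : p.IsTrail) (hcd : s(c, d) ∈ p.edges)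
    (hH : ∀ e ∈ p.edges, e ≠ s(c, d) → e ∈ H.edgeSet) (huv : H.Reachable u v) :
    H.Reachable c d := by
  induction p with
  | nil => simp at hcd
  | @cons u w v hadj q ih =>
    rw [Walk.isTrail_cons] at hp
    by_cases he : s(u, w) = s(c, d)
    · have hq : H.Reachable w v := ⟨q.transfer H fun e he' =>
        hH e (List.mem_cons_of_mem _ he') fun h => hp.2 (he ▸ h ▸ he')⟩
      rcases Sym2.eq_iff.1 he with ⟨rfl, rfl⟩ | ⟨rfl, rfl⟩
      exacts [huv.trans hq.symm, (huv.trans hq.symm).symm]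
    · have hadj' : H.Adj u w := hH _ List.mem_cons_self he
      exact ih hp.1 ((List.mem_cons.1 hcd).resolve_left (Ne.symm he))
        (fun e he' => hH e (List.mem_cons_of_mem _ he')) (hadj'.symm.reachable.trans huv)

/-- Counting form of "`(K, S)` is a tree" (see `isTreeOn_iff_isTree`); unlike `FormsTree`, it
allows the one-vertex tree `(∅, {r})`. -/
structure IsTreeOn (S : Set (Sym2 V)) (K : Set V) : Prop where
  eSupp_subset : eSupp S ⊆ K
  reachable : ∀ u ∈ K, ∀ v ∈ K, (fromEdgeSet S).Reachable u v
  ncard_eq : K.ncard = S.ncard + 1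

lemma isTreeOn_singleton (r : V) : IsTreeOn ∅ {r} where
  eSupp_subset := by simp [eSupp]
  reachable := by simp
  ncard_eq := by simp

lemma isTreeOn_iff_isTree [Finite V] {S : Set (Sym2 V)} {K : Set V} (hS : ∀ e ∈ S, ¬ e.IsDiag)
    (hK : eSupp S ⊆ K) : IsTreeOn S K ↔ ((fromEdgeSet S).induce K).IsTree := by
  rw [isTree_iff_connected_and_card, connected_iff, nat_card_edgeSet_induce hS hK,
    Nat.card_coe_set_eq, Set.nonempty_coe_sort]
  constructor
  · intro h
    refine ⟨⟨fun u v => (reachable_induce_iff hK).2 (h.reachable u u.2 v v.2), ?_⟩,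
      h.ncard_eq.symm⟩
    exact Set.nonempty_of_ncard_ne_zero (by rw [h.ncard_eq]; omega)
  · rintro ⟨⟨hconn, -⟩, hcard⟩
    exact ⟨hK, fun u hu v hv => (reachable_induce_iff hK).1 (hconn ⟨u, hu⟩ ⟨v, hv⟩), hcard.symm⟩

namespace IsTreeOn

variable {S : Set (Sym2 V)} {K : Set V}

lemma eSupp_eq (h : IsTreeOn S K) (hS : S.Nonempty) : eSupp S = K := by
  refine h.eSupp_subset.antisymm fun u hu => ?_
  obtain ⟨a, ha⟩ := eSupp_nonempty hS
  by_cases hua : u = a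
  · exact hua ▸ ha
  · exact mem_eSupp_of_reachable (h.reachable u hu a (h.eSupp_subset ha)) hua

variable [Finite V]

lemma union_pendant (h : IsTreeOn S K) {a b : V} (ha : a ∈ K) (hb : b ∉ K) :
    IsTreeOn (S ∪ {s(a, b)}) (insert b K) := by
  have hba : b ≠ a := fun h => hb (h ▸ ha)
  have hab : s(a, b) ∉ S := fun hab =>
    hb (h.eSupp_subset (mem_eSupp_of_mem hab (Sym2.mem_mk_right a b)))
  have hto : ∀ u ∈ insert b K, (fromEdgeSet (S ∪ {s(a, b)})).Reachable u a := by
    rintro u (rfl | hu)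
    · exact ((fromEdgeSet_adj _).2 ⟨Or.inr Sym2.eq_swap, hba⟩).reachable
    · exact (h.reachable u hu a ha).mono (fromEdgeSet_mono Set.subset_union_left)
  refine ⟨?_, fun u hu v hv => (hto u hu).trans (hto v hv).symm, ?_⟩
  · rw [eSupp_union, eSupp_singleton]
    exact Set.union_subset (h.eSupp_subset.trans (Set.subset_insert b K))
      (Set.pair_subset (Set.mem_insert_of_mem b ha) (Set.mem_insert b K))
  · rw [Set.ncard_insert_of_notMem hb, h.ncard_eq, Set.union_singleton,
      Set.ncard_insert_of_notMem hab]

lemma diff_leaf (h : IsTreeOn S K) {y z : V} (hf : s(y, z) ∈ S)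
    (hleaf : ∀ e ∈ S, y ∈ e → e = s(y, z)) : IsTreeOn (S \ {s(y, z)}) (K \ {y}) := by
  classical
  have hy : y ∈ K := h.eSupp_subset (mem_eSupp_of_mem hf (Sym2.mem_mk_left y z))
  -- contracting the leaf edge onto `z` maps walks of `S` to walks of `S \ {s(y, z)}`
  let ψ : V → V := fun v => if v = y then z else v
  have hψ : ∀ a b, (fromEdgeSet S).Adj a b →
      (fromEdgeSet (S \ {s(y, z)})).Reachable (ψ a) (ψ b) := by
    intro a b hab
    obtain ⟨habS, hne⟩ := (fromEdgeSet_adj _).1 hab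
    by_cases hf' : s(a, b) = s(y, z)
    · rcases Sym2.eq_iff.1 hf' with ⟨rfl, rfl⟩ | ⟨rfl, rfl⟩
      all_goals simp [ψ]
    · have hay : a ≠ y := fun h => hf' (hleaf _ habS (h ▸ Sym2.mem_mk_left a b))
      have hby : b ≠ y := fun h => hf' (hleaf _ habS (h ▸ Sym2.mem_mk_right a b))
      simp only [ψ, hay, hby]
      exact ((fromEdgeSet_adj (S \ {s(y, z)})).2 ⟨⟨habS, hf'⟩, hne⟩).reachable
  refine ⟨?_, fun u hu v hv => ?_, ?_⟩
  · rintro v ⟨e, ⟨he, hne⟩, hv⟩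
    exact ⟨h.eSupp_subset (mem_eSupp_of_mem he hv), fun hvy => hne (hleaf e he (hvy ▸ hv))⟩
  · have hψu : ψ u = u := if_neg fun h => hu.2 h
    have hψv : ψ v = v := if_neg fun h => hv.2 h
    exact hψu ▸ hψv ▸ reachable_map_of_forall_adj ψ hψ (h.reachable u hu.1 v hv.1)
  · have := Set.ncard_sdiff_singleton_add_one hy
    have := Set.ncard_sdiff_singleton_add_one hf
    have := h.ncard_eq
    omega

lemma exchange (h : IsTreeOn S K) {a b c d : V} (hcd : s(c, d) ∈ S) (ha : a ∈ K) (hb : b ∈ K)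
    (hab : s(a, b) ∉ S) (hreach : (fromEdgeSet (S \ {s(c, d)} ∪ {s(a, b)})).Reachable c d) :
    IsTreeOn (S \ {s(c, d)} ∪ {s(a, b)}) K := by
  have hadj : ∀ x y, (fromEdgeSet S).Adj x y →
      (fromEdgeSet (S \ {s(c, d)} ∪ {s(a, b)})).Reachable x y := by
    intro x y hxy
    obtain ⟨hxyS, hne⟩ := (fromEdgeSet_adj _).1 hxy
    by_cases he : s(x, y) = s(c, d)
    · rcases Sym2.eq_iff.1 he with ⟨rfl, rfl⟩ | ⟨rfl, rfl⟩
      exacts [hreach, hreach.symm]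
    · exact ((fromEdgeSet_adj _).2 ⟨Or.inl ⟨hxyS, he⟩, hne⟩).reachable
  refine ⟨?_, fun u hu v hv => reachable_map_of_forall_adj id hadj (h.reachable u hu v hv), ?_⟩
  · rw [eSupp_union, eSupp_singleton]
    exact Set.union_subset ((eSupp_mono Set.sdiff_subset).trans h.eSupp_subset)
      (Set.pair_subset ha hb)
  · rw [ncard_exchange hcd hab, h.ncard_eq]

end IsTreeOn

section FormsTree

variable [Finite V] {G : SimpleGraph V} {T : Set (Sym2 V)}

lemma formsTree_iff : FormsTree G T ↔ T ⊆ G.edgeSet ∧ IsTreeOn T (eSupp T) := by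
  refine and_congr_right fun hG => (isTreeOn_iff_isTree ?_ subset_rfl).symm
  exact fun e he => G.not_isDiag_of_mem_edgeSet (hG he)

lemma FormsTree.of_isTreeOn {K : Set V} (hG : T ⊆ G.edgeSet) (hT : T.Nonempty)
    (h : IsTreeOn T K) : FormsTree G T :=
  formsTree_iff.2 ⟨hG, h.eSupp_eq hT ▸ h⟩

lemma FormsTree.reachable (h : FormsTree G T) {u v : V} (hu : u ∈ eSupp T) (hv : v ∈ eSupp T) :
    G.Reachable u v := by
  refine ((formsTree_iff.1 h).2.reachable u hu v hv).mono ?_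
  simpa using fromEdgeSet_mono (formsTree_iff.1 h).1

lemma FormsTree.exchange_of_mem_edges (hT : FormsTree G T) {a b c d : V}
    (hab : s(a, b) ∈ G.edgeSet) (hnot : s(a, b) ∉ T) (p : (fromEdgeSet T).Walk a b)
    (hp : p.IsTrail) (hcd : s(c, d) ∈ p.edges) :
    FormsTree G (T \ {s(c, d)} ∪ {s(a, b)}) ∧ eSupp (T \ {s(c, d)} ∪ {s(a, b)}) = eSupp T := by
  obtain ⟨hG, h⟩ := formsTree_iff.1 hT
  have hne : a ≠ b := G.ne_of_adj hab
  have hreach : (fromEdgeSet (T \ {s(c, d)} ∪ {s(a, b)})).Reachable c d := by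
    refine reachable_of_mem_edges_of_isTrail p hp hcd (fun e he hne' => ?_)
      ((fromEdgeSet_adj _).2 ⟨Or.inr rfl, hne⟩).reachable
    obtain ⟨heT, hdiag⟩ := edgeSet_fromEdgeSet T ▸ p.edges_subset_edgeSet he
    exact edgeSet_fromEdgeSet _ ▸ ⟨Or.inl ⟨heT, hne'⟩, hdiag⟩
  have hU := h.exchange (mem_of_mem_edges p hcd) (mem_eSupp_of_reachable ⟨p⟩ hne)
    (mem_eSupp_of_reachable ⟨p.reverse⟩ hne.symm) hnot hreach
  have hUne : (T \ {s(c, d)} ∪ {s(a, b)}).Nonempty := ⟨s(a, b), Or.inr rfl⟩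
  refine ⟨FormsTree.of_isTreeOn ?_ hUne hU, hU.eSupp_eq hUne⟩
  exact Set.union_subset (Set.sdiff_subset.trans hG) (Set.singleton_subset_iff.2 hab)

lemma FormsTree.exchange_leaf (hT : FormsTree G T) {y z a b : V} (hf : s(y, z) ∈ T)
    (hleaf : ∀ e ∈ T, y ∈ e → e = s(y, z)) (hab : s(a, b) ∈ G.edgeSet) (ha : a ∈ eSupp T)
    (hay : a ≠ y) (hb : b ∉ eSupp T) :
    FormsTree G (T \ {s(y, z)} ∪ {s(a, b)}) ∧
      eSupp (T \ {s(y, z)} ∪ {s(a, b)}) = insert b (eSupp T \ {y}) := by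
  obtain ⟨hG, h⟩ := formsTree_iff.1 hT
  have hU := (h.diff_leaf hf hleaf).union_pendant ⟨ha, hay⟩ fun h => hb h.1
  have hUne : (T \ {s(y, z)} ∪ {s(a, b)}).Nonempty := ⟨s(a, b), Or.inr rfl⟩
  refine ⟨FormsTree.of_isTreeOn ?_ hUne hU, hU.eSupp_eq hUne⟩
  exact Set.union_subset (Set.sdiff_subset.trans hG) (Set.singleton_subset_iff.2 hab)

end FormsTree

lemma sum_degree_fromEdgeSet [Fintype V] {S : Set (Sym2 V)} [DecidableRel (fromEdgeSet S).Adj]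
    (hS : ∀ e ∈ S, ¬ e.IsDiag) : ∑ v, (fromEdgeSet S).degree v = 2 * S.ncard := by
  rw [sum_degrees_eq_twice_card_edges, edgeFinset_card, ← Nat.card_eq_fintype_card,
    Nat.card_coe_set_eq, edgeSet_fromEdgeSet_of_forall_not_isDiag hS]

lemma exists_leaf_of_degree_eq_one {S : Set (Sym2 V)} {y : V}
    [Fintype ((fromEdgeSet S).neighborSet y)] (hS : ∀ e ∈ S, ¬ e.IsDiag)
    (h : (fromEdgeSet S).degree y = 1) : ∃ z, s(y, z) ∈ S ∧ ∀ e ∈ S, y ∈ e → e = s(y, z) := by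
  obtain ⟨z, hz, huniq⟩ := degree_eq_one_iff_existsUnique_adj.1 h
  refine ⟨z, ((fromEdgeSet_adj _).1 hz).1, fun e he hye => ?_⟩
  obtain ⟨w, rfl⟩ := Sym2.mem_iff_exists.1 hye
  have hyw : y ≠ w := fun hyw => hS _ he (hyw ▸ Sym2.mk_isDiag_iff.2 rfl)
  rw [huniq w ((fromEdgeSet_adj _).2 ⟨he, hyw⟩)]

section Exchange

variable [Fintype V] {G : SimpleGraph V} {T C : Set (Sym2 V)} {K : Set V}

lemma FormsTree.exists_leaf_notMem (hT : FormsTree G T) (hCT : C ⊆ T) (hCK : eSupp C ⊆ K)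
    (hK : K.ncard = C.ncard + 1) (hKT : K ⊆ eSupp T) (hlt : C.ncard < T.ncard) :
    ∃ y ∉ K, ∃ z, s(y, z) ∈ T ∧ ∀ e ∈ T, y ∈ e → e = s(y, z) := by
  classical
  obtain ⟨hG, h⟩ := formsTree_iff.1 hT
  have hTl : ∀ e ∈ T, ¬ e.IsDiag := fun e he => G.not_isDiag_of_mem_edgeSet (hG he)
  by_contra hno
  have hdeg : ∀ y ∈ eSupp T, y ∉ K → (fromEdgeSet T).degree y ≠ 1 :=
    fun y _ hyK h1 => hno ⟨y, hyK, exists_leaf_of_degree_eq_one hTl h1⟩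
  obtain ⟨k, hk⟩ : K.Nonempty := Set.nonempty_of_ncard_ne_zero (by omega)
  obtain ⟨w, hwT, hwK⟩ := Set.exists_mem_notMem_of_ncard_lt_ncard
    (show K.ncard < (eSupp T).ncard by rw [h.ncard_eq]; omega)
  obtain ⟨a, b, habT, haK, hbK⟩ :=
    exists_boundary_edge_of_reachable (h.reachable k (hKT hk) w hwT) hk hwK
  have hC0 : ∀ v ∉ K, ∀ x, ¬ (fromEdgeSet C).Adj v x := fun v hv x hx =>
    hv (hCK (mem_eSupp_of_mem ((fromEdgeSet_adj _).1 hx).1 (Sym2.mem_mk_left v x)))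
  -- `T`-degrees dominate `C`-degrees, by 2 off `K` (no leaf there) and strictly at `a`; summed,
  -- `2|C| + 2(|eSupp T| - |K|) < 2|T|`, yet the left side is `2|T|` by the vertex counts.
  have hle : ∀ v, (fromEdgeSet C).degree v + (if v ∈ eSupp T \ K then 2 else 0) ≤
      (fromEdgeSet T).degree v := by
    intro v
    by_cases hv : v ∈ eSupp T \ K
    · obtain ⟨e, he, hve⟩ := hv.1
      obtain ⟨x, rfl⟩ := Sym2.mem_iff_exists.1 hve
      have hvx : v ≠ x := fun hvx => hTl _ he (hvx ▸ Sym2.mk_isDiag_iff.2 rfl)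
      have h1 : 0 < (fromEdgeSet T).degree v :=
        (degree_pos_iff_exists_adj _ _).2 ⟨x, (fromEdgeSet_adj _).2 ⟨he, hvx⟩⟩
      have h0 : (fromEdgeSet C).degree v = 0 := by
        rw [degree_eq_zero_iff_notMem_support]
        exact fun ⟨x, hx⟩ => hC0 v hv.2 x hx
      have := hdeg v hv.1 hv.2
      rw [if_pos hv, h0]
      omega
    · rw [if_neg hv, add_zero]
      exact degree_le_of_le (fromEdgeSet_mono hCT)
  have hlt' : (fromEdgeSet C).degree a + (if a ∈ eSupp T \ K then 2 else 0) <
      (fromEdgeSet T).degree a := by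
    rw [if_neg fun h => h.2 haK, add_zero, ← card_neighborFinset_eq_degree,
      ← card_neighborFinset_eq_degree]
    refine Finset.card_lt_card ((Finset.ssubset_iff_of_subset fun x => ?_).2 ⟨b, ?_, ?_⟩)
    · simpa only [mem_neighborFinset] using fun hx => fromEdgeSet_mono hCT hx
    · exact (mem_neighborFinset _ _ _).2 ((fromEdgeSet_adj _).2 ⟨habT, fun h => hbK (h ▸ haK)⟩)
    · exact fun hb => hC0 b hbK a ((mem_neighborFinset _ _ _).1 hb).symm
  have hsum := Finset.sum_lt_sum (fun v _ => hle v) ⟨a, Finset.mem_univ a, hlt'⟩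
  have hind (D : Set V) [DecidablePred (· ∈ D)] :
      ∑ v, (if v ∈ D then 2 else 0) = 2 * D.ncard := by
    simp [Finset.sum_ite, Set.ncard_eq_toFinset_card', mul_comm]
  rw [Finset.sum_add_distrib, sum_degree_fromEdgeSet (fun e he => hTl e (hCT he)),
    sum_degree_fromEdgeSet hTl, hind] at hsum
  have := Set.ncard_sdiff_add_ncard_of_subset hKT
  have := h.ncard_eq
  omega

lemma FormsTree.exists_exchange (hT : FormsTree G T) (hC : IsTreeOn C K) (hCT : C ⊆ T)
    (hKT : K ⊆ eSupp T) (hlt : C.ncard < T.ncard) {a x : V} (hax : s(a, x) ∈ G.edgeSet)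
    (hnot : s(a, x) ∉ T) (ha : a ∈ K) (hx : x ∉ K) :
    ∃ e ∈ T, e ∉ C ∧ FormsTree G (T \ {e} ∪ {s(a, x)}) ∧
      insert x K ⊆ eSupp (T \ {e} ∪ {s(a, x)}) := by
  classical
  by_cases hxT : x ∈ eSupp T
  · obtain ⟨q⟩ := (formsTree_iff.1 hT).2.reachable a (hKT ha) x hxT
    obtain ⟨d, hd, hdK, hdK'⟩ := q.toPath.1.exists_boundary_dart K ha hx
    have hde : s(d.fst, d.snd) ∈ q.toPath.1.edges := List.mem_map_of_mem hd
    obtain ⟨hT', hsupp⟩ := hT.exchange_of_mem_edges hax hnot _ q.toPath.2.isTrail hde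
    refine ⟨_, mem_of_mem_edges _ hde, fun hC' => hdK' ?_, hT', hsupp ▸ Set.insert_subset hxT hKT⟩
    exact hC.eSupp_subset (mem_eSupp_of_mem hC' (Sym2.mem_mk_right _ _))
  · obtain ⟨y, hyK, z, hf, hleaf⟩ :=
      hT.exists_leaf_notMem hCT hC.eSupp_subset hC.ncard_eq hKT hlt
    obtain ⟨hT', hsupp⟩ := hT.exchange_leaf hf hleaf hax (hKT ha) (fun h => hyK (h ▸ ha)) hxT
    refine ⟨_, hf, fun hC' => hyK ?_, hT', hsupp ▸ Set.insert_subset_insert ?_⟩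
    · exact hC.eSupp_subset (mem_eSupp_of_mem hC' (Sym2.mem_mk_left _ _))
    · exact fun v hv => ⟨hKT hv, fun h => hyK (h ▸ hv)⟩

end Exchange

def TJStepWithin (G : SimpleGraph V) (P : Set (Sym2 V) → Prop) (A B : Set (Sym2 V)) : Prop :=
  TJStepE G A B ∧ P B

lemma tjReachE_iff {G : SimpleGraph V} {P : Set (Sym2 V) → Prop} {A B : Set (Sym2 V)} :
    TJReachE G P A B ↔ P A ∧ ReflTransGen (TJStepWithin G P) A B := by
  constructor
  · rintro ⟨l, f, rfl, rfl, hP, hstep⟩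
    refine ⟨hP 0 l.zero_le, ?_⟩
    have (k : ℕ) (hk : k ≤ l) : ReflTransGen (TJStepWithin G P) (f 0) (f k) := by
      induction k with
      | zero => exact .refl
      | succ k ih => exact (ih (by omega)).tail ⟨hstep k (by omega), hP (k + 1) hk⟩
    exact this l le_rfl
  · rintro ⟨hA, h⟩
    induction h with
    | refl => exact ⟨0, fun _ => A, rfl, rfl, fun _ _ => hA, fun k hk => absurd hk k.not_lt_zero⟩
    | @tail B C _ hBC ih =>
      obtain ⟨l, f, h0, hl, hP, hstep⟩ := ih
      refine ⟨l + 1, fun n => if n ≤ l then f n else C, by simp [h0], by simp, fun k hk => ?_,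
        fun k hk => ?_⟩
      · by_cases hkl : k ≤ l
        · simpa [hkl] using hP k hkl
        · simpa [hkl] using hBC.2
      · by_cases hkl : k + 1 ≤ l
        · simpa [hkl, (by omega : k ≤ l)] using hstep k (by omega)
        · obtain rfl : k = l := by omega
          simpa [hl] using hBC.1

lemma TJStepE.ncard_eq [Finite V] {G : SimpleGraph V} {A B : Set (Sym2 V)} (h : TJStepE G A B) :
    B.ncard = A.ncard := by
  obtain ⟨em, ep, hem, -, hep, rfl⟩ := h
  exact ncard_exchange hem hep

lemma TJStepE.exists_mem_of_two_le_ncard {G : SimpleGraph V} {A B : Set (Sym2 V)}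
    (h : TJStepE G A B) (hA : 2 ≤ A.ncard) : ∃ e ∈ A, e ∈ B := by
  obtain ⟨em, ep, -, -, -, rfl⟩ := h
  obtain ⟨e, he, hne⟩ := Set.exists_ne_of_one_lt_ncard hA em
  exact ⟨e, he, Or.inl ⟨he, hne⟩⟩

lemma reachable_of_reflTransGen [Finite V] {G : SimpleGraph V} {Es T : Set (Sym2 V)}
    (hs : FormsTree G Es) (h2 : 2 ≤ Es.ncard)
    (h : ReflTransGen (TJStepWithin G (FormsTree G)) Es T) {u v : V} (hu : u ∈ eSupp Es)
    (hv : v ∈ eSupp T) : G.Reachable u v := by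
  suffices T.ncard = Es.ncard ∧ ∀ v ∈ eSupp T, G.Reachable u v from this.2 v hv
  clear hv
  induction h with
  | refl => exact ⟨rfl, fun v hv => hs.reachable hu hv⟩
  | @tail B C _ hBC ih =>
    obtain ⟨e, heB, heC⟩ := hBC.1.exists_mem_of_two_le_ncard (ih.1 ▸ h2)
    have hw := ih.2 _ (mem_eSupp_of_mem heB e.out_fst_mem)
    exact ⟨hBC.1.ncard_eq.trans ih.1,
      fun v hv => hw.trans (hBC.2.reachable (mem_eSupp_of_mem heC e.out_fst_mem) hv)⟩

section Reconfiguration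

variable [Fintype V] {G : SimpleGraph V} {T C : Set (Sym2 V)} {K : Set V}

lemma FormsTree.exists_extend (hT : FormsTree G T) (hC : IsTreeOn C K) (hCT : C ⊆ T)
    (hKT : K ⊆ eSupp T) (hlt : C.ncard < T.ncard) {a x : V} (hax : s(a, x) ∈ G.edgeSet)
    (ha : a ∈ K) (hx : x ∉ K) :
    ∃ T', ReflTransGen (TJStepWithin G (FormsTree G)) T T' ∧ FormsTree G T' ∧
      T'.ncard = T.ncard ∧ C ∪ {s(a, x)} ⊆ T' ∧ insert x K ⊆ eSupp T' := by
  by_cases haxT : s(a, x) ∈ T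
  · exact ⟨T, .refl, hT, rfl, Set.union_subset hCT (Set.singleton_subset_iff.2 haxT),
      Set.insert_subset (mem_eSupp_of_mem haxT (Sym2.mem_mk_right a x)) hKT⟩
  · obtain ⟨e, heT, heC, hT', hKT'⟩ := hT.exists_exchange hC hCT hKT hlt hax haxT ha hx
    refine ⟨_, .single ⟨⟨e, _, heT, hax, haxT, rfl⟩, hT'⟩, hT', ncard_exchange heT haxT,
      Set.union_subset_union (fun c hc => ⟨hCT hc, fun h => heC (h ▸ hc)⟩) subset_rfl, hKT'⟩

lemma reflTransGen_of_common_subtree {T₂ : Set (Sym2 V)} (hT₂ : FormsTree G T₂) (n : ℕ)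
    (hT : FormsTree G T) (hcard : T.ncard = T₂.ncard) (hC : IsTreeOn C K) (hCT : C ⊆ T)
    (hCT₂ : C ⊆ T₂) (hKT : K ⊆ eSupp T) (hKT₂ : K ⊆ eSupp T₂)
    (hn : T₂.ncard ≤ C.ncard + n) : ReflTransGen (TJStepWithin G (FormsTree G)) T T₂ := by
  induction n generalizing T C K with
  | zero =>
    have hC₂ := Set.eq_of_subset_of_ncard_le hCT₂ (by omega)
    obtain rfl := hC₂ ▸ Set.eq_of_subset_of_ncard_le hCT (by omega)
    exact .refl
  | succ n ih =>
    obtain ⟨hG₂, h₂⟩ := formsTree_iff.1 hT₂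
    by_cases hfull : T₂.ncard ≤ C.ncard
    · exact ih hT hcard hC hCT hCT₂ hKT hKT₂ (by omega)
    obtain ⟨k, hk⟩ : K.Nonempty := Set.nonempty_of_ncard_ne_zero (by rw [hC.ncard_eq]; omega)
    obtain ⟨w, hw, hwK⟩ := Set.exists_mem_notMem_of_ncard_lt_ncard
      (show K.ncard < (eSupp T₂).ncard by rw [hC.ncard_eq, h₂.ncard_eq]; omega)
    obtain ⟨a, x, hax, ha, hx⟩ :=
      exists_boundary_edge_of_reachable (h₂.reachable k (hKT₂ hk) w hw) hk hwK
    obtain ⟨T', hTT', hT', hcard', hCT', hKT'⟩ :=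
      hT.exists_extend hC hCT hKT (by omega) (hG₂ hax) ha hx
    have hC' := hC.union_pendant ha hx
    have hC'card := hC'.ncard_eq
    rw [Set.ncard_insert_of_notMem hx, hC.ncard_eq] at hC'card
    exact hTT'.trans (ih hT' (hcard'.trans hcard) hC' hCT'
      (Set.union_subset hCT₂ (Set.singleton_subset_iff.2 hax)) hKT'
      (Set.insert_subset (mem_eSupp_of_mem hax (Sym2.mem_mk_right a x)) hKT₂) (by omega))

lemma exists_reflTransGen_mem_eSupp {u v : V} (p : G.Walk u v) (hT : FormsTree G T)
    (hu : u ∈ eSupp T) :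
    ∃ T', ReflTransGen (TJStepWithin G (FormsTree G)) T T' ∧ FormsTree G T' ∧
      T'.ncard = T.ncard ∧ v ∈ eSupp T' := by
  induction p generalizing T with
  | nil => exact ⟨T, .refl, hT, rfl, hu⟩
  | @cons a x v hadj q ih =>
    have hpos : (∅ : Set (Sym2 V)).ncard < T.ncard := by
      obtain ⟨e, he, -⟩ := hu
      rw [Set.ncard_empty]
      exact (Set.ncard_pos).2 ⟨e, he⟩
    obtain ⟨T', h₁, hT', hcard₁, -, hx⟩ := hT.exists_extend (isTreeOn_singleton a)
      (Set.empty_subset T) (Set.singleton_subset_iff.2 hu) hpos hadj rfl (G.ne_of_adj hadj).symm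
    obtain ⟨T'', h₂, hT'', hcard₂, hv⟩ := ih hT' (hx (Set.mem_insert x _))
    exact ⟨T'', h₁.trans h₂, hT'', hcard₂.trans hcard₁, hv⟩

lemma reflTransGen_of_reachable {Es Et : Set (Sym2 V)} (hs : FormsTree G Es)
    (ht : FormsTree G Et) (hcard : Es.ncard = Et.ncard) {u v : V} (hu : u ∈ eSupp Es)
    (hv : v ∈ eSupp Et) (huv : G.Reachable u v) :
    ReflTransGen (TJStepWithin G (FormsTree G)) Es Et := by
  obtain ⟨p⟩ := huv
  obtain ⟨T, h₁, hT, hcardT, hvT⟩ := exists_reflTransGen_mem_eSupp p hs hu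
  exact h₁.trans (reflTransGen_of_common_subtree ht Et.ncard hT (hcardT.trans hcard)
    (isTreeOn_singleton v) (Set.empty_subset T) (Set.empty_subset Et)
    (Set.singleton_subset_iff.2 hvT) (Set.singleton_subset_iff.2 hv) (by simp))

end Reconfiguration

theorem stmt8 [Fintype V] (G : SimpleGraph V) (Es Et : Set (Sym2 V))
    (hcard : Es.ncard = Et.ncard) (h2 : 2 ≤ Es.ncard)
    (hs : FormsTree G Es) (ht : FormsTree G Et) :
    TJReachE G (FormsTree G) Es Et ↔
      ∀ u ∈ eSupp (Es ∪ Et), ∀ v ∈ eSupp (Es ∪ Et), G.Reachable u v := by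
  obtain ⟨u, hu⟩ := eSupp_nonempty (Set.nonempty_of_ncard_ne_zero (by omega) : Es.Nonempty)
  obtain ⟨v, hv⟩ := eSupp_nonempty (Set.nonempty_of_ncard_ne_zero (by omega) : Et.Nonempty)
  rw [tjReachE_iff, eSupp_union]
  constructor
  · rintro ⟨-, h⟩
    have hfrom : ∀ w ∈ eSupp Es ∪ eSupp Et, G.Reachable u w := by
      rintro w (hw | hw)
      exacts [hs.reachable hu hw, reachable_of_reflTransGen hs h2 h hu hw]
    exact fun w hw w' hw' => (hfrom w hw).symm.trans (hfrom w' hw')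
  · intro h
    exact ⟨hs, reflTransGen_of_reachable hs ht hcard hu hv (h u (Or.inl hu) v (Or.inr hv))⟩

end Stmt8
end

section
/- Let G be a simple graph and let V_s, V_t ⊆ V(G) be vertex subsets with |V_s| = |V_t| ≥ 2 such that the induced subgraphs G[V_s] and G[V_t] are connected. Then there exists a sequence V_s = V_0, V_1, …, V_ℓ = V_t of vertex subsets of G such that every G[V_i] is connected, |V_i| = |V_s| for all i, and each V_i is obtained from V_{i-1} by removing one vertex and adding one vertex (a TJ step), if and only if V_s and V_t are contained in the same connected component of G. -/
namespace Stmt9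

variable {V : Type*}

/-- A single token-jumping (TJ) step on vertex subsets of a graph on `V`:
remove one vertex and add one vertex. -/
def TJStepV (V1 V2 : Set V) : Prop :=
  ∃ u v, u ∈ V1 ∧ v ∉ V1 ∧ V2 = (V1 \ {u}) ∪ {v}

section Aux

variable (G : SimpleGraph V)

/-- Reachability through vertices of `S` (endpoint `b` and all intermediate vertices in `S`). -/
def Reach (S : Set V) (a b : V) : Prop :=
  Relation.ReflTransGen (fun x y => G.Adj x y ∧ y ∈ S) a b

/-- Connectivity of the induced subgraph, phrased on the ambient type. -/
def Conn (S : Set V) : Prop := S.Nonempty ∧ ∀ a ∈ S, ∀ b ∈ S, Reach G S a b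

/-- A TJ step with connected target. -/
def Step (S T : Set V) : Prop := TJStepV S T ∧ Conn G T

/-- Connectivity-preserving TJ reconfiguration. -/
def Recon : Set V → Set V → Prop := Relation.ReflTransGen (Step G)

variable {G} {S S' A T V1 V2 : Set V} {a b r s v u : V}

theorem reach_mem (h : Reach G S a b) (ha : a ∈ S) : b ∈ S := by
  induction h with
  | refl => exact ha
  | tail _ h2 _ => exact h2.2

theorem reach_mono (hS : S ⊆ S') (h : Reach G S a b) : Reach G S' a b := by
  induction h with
  | refl => exact .refl
  | tail _ h2 ih => exact ih.tail ⟨h2.1, hS h2.2⟩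

theorem reach_symm (ha : a ∈ S) (h : Reach G S a b) : Reach G S b a := by
  induction h with
  | refl => exact .refl
  | @tail c d _ h2 ih =>
      exact (Relation.ReflTransGen.single ⟨h2.1.symm, reach_mem (by assumption) ha⟩).trans ih

theorem reach_reachable (h : Reach G S a b) : G.Reachable a b := by
  induction h with
  | refl => exact SimpleGraph.Reachable.refl _
  | tail _ h2 ih => exact ih.trans h2.1.reachable

theorem conn_of_forall (ha : a ∈ S) (h : ∀ x ∈ S, Reach G S a x) : Conn G S := by
  refine ⟨⟨a, ha⟩, fun x hx y hy => ?_⟩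
  exact (reach_symm ha (h x hx)).trans (h y hy)

theorem walk_reach {x y : S} (w : (G.induce S).Walk x y) : Reach G S x.1 y.1 := by
  induction w with
  | nil => exact .refl
  | cons h _ ih => exact .head ⟨h, Subtype.prop _⟩ ih

theorem conn_iff : (G.induce S).Connected ↔ Conn G S := by
  constructor
  · intro hc
    obtain ⟨a, ha⟩ := hc.nonempty
    refine ⟨⟨a, ha⟩, fun x hx y hy => ?_⟩
    obtain ⟨w⟩ := hc.preconnected ⟨x, hx⟩ ⟨y, hy⟩
    exact walk_reach w
  · rintro ⟨⟨a, ha⟩, h⟩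
    rw [SimpleGraph.connected_iff]
    refine ⟨fun ⟨x, hx⟩ ⟨y, hy⟩ => ?_, ⟨⟨a, ha⟩⟩⟩
    have hr := h x hx y hy
    have key : ∀ c (hc : c ∈ S), Reach G S x c → (G.induce S).Reachable ⟨x, hx⟩ ⟨c, hc⟩ := by
      intro c hc hrc
      induction hrc with
      | refl => exact SimpleGraph.Reachable.refl _
      | @tail p q hp hq ih =>
          exact (ih (reach_mem hp hx)).trans (SimpleGraph.Adj.reachable (by exact hq.1))
    exact key y hy hr

theorem conn_insert_adj (hc : Conn G S) (hs : s ∈ S) (hadj : G.Adj s v) :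
    Conn G (insert v S) := by
  refine conn_of_forall (a := s) (Set.mem_insert_of_mem _ hs) (fun x hx => ?_)
  rcases hx with rfl | hx
  · exact Relation.ReflTransGen.single ⟨hadj, Set.mem_insert _ _⟩
  · exact reach_mono (Set.subset_insert _ _) (hc.2 s hs x hx)

theorem exists_adj_boundary (hT : Conn G T) (hAT : A ⊆ T) (ha : a ∈ A)
    (hx : r ∈ T) (hxA : r ∉ A) : ∃ b ∈ A, ∃ w ∈ T \ A, G.Adj b w := by
  have hr : Reach G T a r := hT.2 a (hAT ha) r hx
  clear hx
  induction hr with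
  | refl => exact absurd ha hxA
  | @tail p q hp hq ih =>
      by_cases hpA : p ∈ A
      · exact ⟨p, hpA, q, ⟨hq.2, hxA⟩, hq.1⟩
      · exact ih hpA

/-- Key lemma: from a connected finite set one can remove a vertex outside a given
connected proper subset, keeping connectivity. -/

theorem exists_removable [Fintype V] (hS : Conn G S) (hA : Conn G A) (hAS : A ⊆ S)
    (hne : A ≠ S) : ∃ u ∈ S \ A, Conn G (S \ {u}) := by
  classical
  obtain ⟨a₀, ha₀⟩ := hA.1
  -- iterated neighborhoods
  set B : ℕ → Set V := fun n => Nat.rec A (fun _ Bn => Bn ∪ {x | x ∈ S ∧ ∃ y ∈ Bn, G.Adj y x}) n with hB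
  have hB0 : B 0 = A := rfl
  have hBsucc : ∀ n, B (n + 1) = B n ∪ {x | x ∈ S ∧ ∃ y ∈ B n, G.Adj y x} := fun n => rfl
  have hBS : ∀ n, B n ⊆ S := by
    intro n
    induction n with
    | zero => exact hAS
    | succ n ih => rw [hBsucc]; rintro x (hx | hx); exacts [ih hx, hx.1]
  have hcover : ∀ x ∈ S, ∃ n, x ∈ B n := by
    intro x hx
    have hr : Reach G S a₀ x := hS.2 a₀ (hAS ha₀) x hx
    clear hx
    induction hr with
    | refl => exact ⟨0, ha₀⟩
    | @tail p q hp hq ih =>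
        obtain ⟨n, hn⟩ := ih
        exact ⟨n + 1, by rw [hBsucc]; exact Or.inr ⟨hq.2, p, hn, hq.1⟩⟩
  -- distance function
  set d : V → ℕ := fun x => if h : ∃ n, x ∈ B n then Nat.find h else 0 with hd
  have hdspec : ∀ x ∈ S, x ∈ B (d x) := by
    intro x hx
    have h := hcover x hx
    simp only [hd, dif_pos h]
    exact Nat.find_spec h
  have hdle : ∀ x n, x ∈ B n → d x ≤ n := by
    intro x n hx
    have h : ∃ n, x ∈ B n := ⟨n, hx⟩
    simp only [hd, dif_pos h]
    exact Nat.find_le hx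
  -- pick u maximizing d over S \ A
  have hSA : (S \ A).Nonempty := by
    rcases Set.exists_of_ssubset (hAS.ssubset_of_ne hne) with ⟨x, hx, hxA⟩
    exact ⟨x, hx, hxA⟩
  obtain ⟨u, huSA, hmax⟩ := Set.exists_max_image (S \ A) d (Set.toFinite _) hSA
  refine ⟨u, huSA, ?_⟩
  have huA : u ∉ A := huSA.2
  have ha₀u : a₀ ∈ S \ {u} := ⟨hAS ha₀, fun h => huA (h ▸ ha₀)⟩
  refine conn_of_forall (a := a₀) ha₀u (fun x hx => ?_)
  obtain ⟨hxS, hxu⟩ := hx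
  -- strong induction on d x
  have claim : ∀ n x, x ∈ S → x ≠ u → d x ≤ n → Reach G (S \ {u}) a₀ x := by
    intro n
    induction n with
    | zero =>
      intro x hxS hxu hdx
      have hx0 : x ∈ B 0 := by
        have := hdspec x hxS; rwa [Nat.le_zero.mp hdx] at this
      rw [hB0] at hx0
      exact reach_mono (fun z hz => ⟨hAS hz, fun h => huA (h ▸ hz)⟩) (hA.2 a₀ ha₀ x hx0)
    | succ n ih =>
      intro x hxS hxu hdx
      by_cases hxA : x ∈ A
      · exact reach_mono (fun z hz => ⟨hAS hz, fun h => huA (h ▸ hz)⟩) (hA.2 a₀ ha₀ x hxA)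
      · have hdxu : d x ≤ d u := hmax x ⟨hxS, hxA⟩
        have hxB : x ∈ B (d x) := hdspec x hxS
        rcases Nat.eq_zero_or_eq_succ_pred (d x) with h0 | hsu
        · rw [h0, hB0] at hxB; exact absurd hxB hxA
        · set m := (d x) - 1 with hm
          rw [hsu, hBsucc] at hxB
          have hxnotBm : x ∉ B m := by
            intro hmem
            have := hdle x m hmem
            omega
          rcases hxB with hmem | ⟨_, y, hyB, hadj⟩
          · exact absurd hmem hxnotBm
          · have hyS : y ∈ S := hBS m hyB
            have hdy : d y ≤ m := hdle y m hyB
            have hyu : y ≠ u := by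
              intro h
              subst h
              omega
            have hdxn : d x ≤ n + 1 := hdx
            have : Reach G (S \ {u}) a₀ y := ih y hyS hyu (by omega)
            exact this.tail ⟨hadj, hxS, hxu⟩
  exact claim (d x) x hxS hxu le_rfl

theorem tj_ncard (h : TJStepV V1 V2) : V2.ncard = V1.ncard := by
  obtain ⟨u, v, hu, hv, rfl⟩ := h
  rw [Set.union_singleton, Set.ncard_exchange hv hu]

theorem tj_symm (h : TJStepV V1 V2) : TJStepV V2 V1 := by
  obtain ⟨u, v, hu, hv, rfl⟩ := h
  refine ⟨v, u, Set.mem_union_right _ rfl, ?_, ?_⟩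
  · rintro (⟨h1, h2⟩ | h1)
    · exact h2 rfl
    · exact hv (h1 ▸ hu)
  · ext x
    simp only [Set.mem_union, Set.mem_diff, Set.mem_singleton_iff]
    constructor
    · intro hx
      by_cases hxu : x = u
      · exact Or.inr hxu
      · exact Or.inl ⟨Or.inl ⟨hx, hxu⟩, fun h => hv (h ▸ hx)⟩
    · rintro (⟨(⟨h1, h2⟩ | h1), h3⟩ | rfl)
      · exact h1
      · exact absurd h1 h3
      · exact hu

theorem recon_ncard (h : Recon G S T) : T.ncard = S.ncard := by
  induction h with
  | refl => rfl
  | tail _ h2 ih => rw [tj_ncard h2.1, ih]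

theorem recon_conn (h : Recon G S T) (hS : Conn G S) : Conn G T := by
  induction h with
  | refl => exact hS
  | tail _ h2 _ => exact h2.2

theorem recon_symm (h : Recon G S T) (hS : Conn G S) : Recon G T S := by
  induction h with
  | refl => exact .refl
  | @tail P Q h1 h2 ih =>
      exact Relation.ReflTransGen.trans
        (Relation.ReflTransGen.single ⟨tj_symm h2.1, recon_conn h1 hS⟩) (ih)

/-- one TJ move adding an adjacent vertex `v`, avoiding a connected set `A ∋ v`. -/

theorem step_adj [Fintype V] (hS : Conn G S) (hv : v ∉ S) (hs : s ∈ S) (hadj : G.Adj s v)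
    (hA : Conn G A) (hvA : v ∈ A) (hAS : A ⊆ insert v S) (hne : A ≠ insert v S) :
    ∃ u ∈ S, u ∉ A ∧ Step G S ((S \ {u}) ∪ {v}) ∧ A ⊆ (S \ {u}) ∪ {v} := by
  have hSv : Conn G (insert v S) := conn_insert_adj hS hs hadj
  obtain ⟨u, huSA, hconn⟩ := exists_removable hSv hA hAS hne
  have huv : u ≠ v := fun h => huSA.2 (h ▸ hvA)
  have huS : u ∈ S := by rcases huSA.1 with h | h; exacts [absurd h huv, h]
  have hset : insert v S \ {u} = (S \ {u}) ∪ {v} := by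
    ext x
    simp only [Set.mem_diff, Set.mem_insert_iff, Set.mem_union, Set.mem_singleton_iff]
    constructor
    · rintro ⟨rfl | h1, h2⟩
      · exact Or.inr rfl
      · exact Or.inl ⟨h1, h2⟩
    · rintro (⟨h1, h2⟩ | rfl)
      · exact ⟨Or.inr h1, h2⟩
      · exact ⟨Or.inl rfl, huv.symm⟩
  rw [hset] at hconn
  refine ⟨u, huS, huSA.2, ⟨⟨u, v, huS, hv, rfl⟩, hconn⟩, ?_⟩
  intro x hx
  rcases hAS hx with rfl | hxS
  · exact Or.inr rfl
  · exact Or.inl ⟨hxS, fun h => huSA.2 (h ▸ hx)⟩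

theorem recon_to_vertex [Fintype V] :
    ∀ {s : V} (S : Set V), G.Walk s r → Conn G S → s ∈ S →
      ∃ S', Recon G S S' ∧ r ∈ S' := by
  intro s S w
  induction w generalizing S with
  | nil => exact fun hS hs => ⟨S, .refl, hs⟩
  | @cons x y _ hadj _ ih =>
      intro hS hx
      by_cases hyS : y ∈ S
      · exact ih S hS hyS
      · have hne : ({y} : Set V) ≠ insert y S := by
          intro h
          have : x ∈ ({y} : Set V) := h ▸ Set.mem_insert_of_mem _ hx
          rw [Set.mem_singleton_iff] at this
          exact hyS (this ▸ hx)
        have hyy : y ∈ ({y} : Set V) := Set.mem_singleton y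
        obtain ⟨u, huS, huA, hstep, hsub⟩ := step_adj hS hyS hx hadj
          (conn_of_forall hyy (by
            intro z hz
            rw [Set.mem_singleton_iff] at hz
            subst hz
            exact .refl)) hyy
          (by intro z hz; rw [Set.mem_singleton_iff] at hz; exact hz ▸ Set.mem_insert _ _) hne
        obtain ⟨S', hrec, hr⟩ := ih _ hstep.2 (hsub rfl)
        exact ⟨S', .head hstep hrec, hr⟩

/-- Main recursion: grow common connected core `A` until `S` becomes `T`. -/

theorem recon_grow [Fintype V] (hT : Conn G T) :
    ∀ n (A S : Set V), (T \ A).ncard = n → Conn G S → Conn G A → A ⊆ S → A ⊆ T →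
      S.ncard = T.ncard → Recon G S T := by
  intro n
  induction n using Nat.strong_induction_on with
  | _ n ih =>
    intro A S hn hS hA hAS hAT hcard
    by_cases hTA : T ⊆ A
    · have hAeqT : A = T := hAT.antisymm hTA
      have hTS : T ⊆ S := by rw [← hAeqT]; exact hAS
      have hST : S = T := (Set.eq_of_subset_of_ncard_le hTS hcard.le (Set.toFinite _)).symm
      exact hST ▸ .refl
    · by_cases hSA : S ⊆ A
      · -- then S = A ⊆ T, with equal cards S = T, contradiction with ¬ T ⊆ A unless done
        have hSeqA : S = A := (hAS.antisymm hSA).symm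
        have hsub : S ⊆ T := by rw [hSeqA]; exact hAT
        have hTS : S = T := Set.eq_of_subset_of_ncard_le hsub hcard.ge (Set.toFinite _)
        exact hTS ▸ .refl
      · obtain ⟨a₀, ha₀⟩ := hA.1
        obtain ⟨x, hxT, hxA⟩ := Set.not_subset.mp hTA
        obtain ⟨bb, hbA, w, ⟨hwT, hwA⟩, hadj⟩ := exists_adj_boundary hT hAT ha₀ hxT hxA
        have hwTA : w ∈ T \ A := ⟨hwT, hwA⟩
        have hcard_lt : (T \ insert w A).ncard < n := by
          have : T \ insert w A = (T \ A) \ {w} := by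
            ext z
            simp only [Set.mem_diff, Set.mem_insert_iff, Set.mem_singleton_iff]
            tauto
          rw [this, ← hn]
          exact Set.ncard_diff_singleton_lt_of_mem hwTA (Set.toFinite _)
        have hA' : Conn G (insert w A) := conn_insert_adj hA hbA hadj
        have hA'T : insert w A ⊆ T := Set.insert_subset hwT hAT
        by_cases hwS : w ∈ S
        · exact ih _ hcard_lt (insert w A) S rfl hS hA'
            (Set.insert_subset hwS hAS) hA'T hcard
        · -- TJ move: add w, remove some u ∉ insert w A
          have hAsub : insert w A ⊆ insert w S :=
            Set.insert_subset_insert hAS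
          have hne : insert w A ≠ insert w S := by
            intro h
            obtain ⟨z, hzS, hzA⟩ := Set.not_subset.mp hSA
            have hz : z ∈ insert w A := h ▸ Set.mem_insert_of_mem _ hzS
            rcases hz with rfl | hz
            · exact hwS hzS
            · exact hzA hz
          obtain ⟨u, huS, huA, hstep, hsub⟩ := step_adj hS hwS (hAS hbA) hadj hA'
            (Set.mem_insert _ _) hAsub hne
          have hrec := ih _ hcard_lt (insert w A) ((S \ {u}) ∪ {w}) rfl hstep.2 hA' hsub hA'T
            (by rw [tj_ncard hstep.1, hcard])
          exact .head hstep hrec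

theorem recon_to_seq (h : Recon G S T) (hS : Conn G S) :
    ∃ (l : ℕ) (f : ℕ → Set V), f 0 = S ∧ f l = T ∧
      (∀ k ≤ l, Conn G (f k) ∧ (f k).ncard = S.ncard) ∧
      ∀ k < l, TJStepV (f k) (f (k + 1)) := by
  induction h with
  | refl =>
      exact ⟨0, fun _ => S, rfl, rfl, fun k _ => ⟨hS, rfl⟩, fun k hk => absurd hk (by omega)⟩
  | @tail P Q h1 h2 ih =>
      obtain ⟨l, f, hf0, hfl, hinv, hstep⟩ := ih
      refine ⟨l + 1, fun k => if k = l + 1 then Q else f k, by simp [hf0], by simp, ?_, ?_⟩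
      · intro k hk
        by_cases hkl : k = l + 1
        · subst hkl
          beta_reduce
          rw [if_pos rfl]
          refine ⟨h2.2, ?_⟩
          rw [tj_ncard h2.1, ← hfl]
          exact (hinv l le_rfl).2
        · simp only [if_neg hkl]
          exact hinv k (by omega)
      · intro k hk
        by_cases hkl : k = l
        · subst hkl
          beta_reduce
          rw [if_neg (by omega : ¬ k = k + 1), if_pos rfl, hfl]
          exact h2.1
        · simp only [if_neg (by omega : ¬ k = l + 1), if_neg (by omega : ¬ k + 1 = l + 1)]
          exact hstep k (by omega)

theorem conn_singleton (r : V) : Conn G ({r} : Set V) :=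
  conn_of_forall (Set.mem_singleton r) (by
    intro z hz
    rw [Set.mem_singleton_iff] at hz
    subst hz
    exact .refl)

end Aux

theorem stmt9 [Fintype V] (G : SimpleGraph V) (Vs Vt : Set V)
    (hcard : Vs.ncard = Vt.ncard) (h2 : 2 ≤ Vs.ncard)
    (hs : (G.induce Vs).Connected) (ht : (G.induce Vt).Connected) :
    (∃ (l : ℕ) (f : ℕ → Set V), f 0 = Vs ∧ f l = Vt ∧
        (∀ k ≤ l, (G.induce (f k)).Connected ∧ (f k).ncard = Vs.ncard) ∧
        ∀ k < l, TJStepV (f k) (f (k + 1))) ↔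
      ∀ u ∈ Vs ∪ Vt, ∀ v ∈ Vs ∪ Vt, G.Reachable u v := by
  have hconnS : Conn G Vs := conn_iff.mp hs
  have hconnT : Conn G Vt := conn_iff.mp ht
  constructor
  · rintro ⟨l, f, hf0, hfl, hinv, hstep⟩
    have hconn : ∀ k ≤ l, Conn G (f k) := fun k hk => conn_iff.mp (hinv k hk).1
    have hwithin : ∀ k ≤ l, ∀ x ∈ f k, ∀ y ∈ f k, G.Reachable x y := fun k hk x hx y hy =>
      reach_reachable ((hconn k hk).2 x hx y hy)
    have key : ∀ k ≤ l, ∀ x ∈ f 0, ∀ y ∈ f k, G.Reachable x y := by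
      intro k
      induction k with
      | zero => exact fun hk => hwithin 0 (by omega)
      | succ k ih =>
          intro hk x hx y hy
          have hk' : k ≤ l := by omega
          obtain ⟨u, v, hu, hv, heq⟩ := hstep k (by omega)
          have h1 : 1 < (f k).ncard := by
            rw [(hinv k hk').2]; omega
          obtain ⟨p, q, hp, hq, hpq⟩ := (Set.one_lt_ncard_iff (Set.toFinite _)).mp h1
          have hz : ∃ z, z ∈ f k ∧ z ∈ f (k + 1) := by
            by_cases hpu : p = u
            · exact ⟨q, hq, heq ▸ Or.inl ⟨hq, fun h => hpq (by rw [hpu, h])⟩⟩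
            · exact ⟨p, hp, heq ▸ Or.inl ⟨hp, hpu⟩⟩
          obtain ⟨z, hz1, hz2⟩ := hz
          exact (ih hk' x hx z hz1).trans (hwithin (k + 1) hk z hz2 y hy)
    intro x hx y hy
    obtain ⟨x0, hx0⟩ := hconnS.1
    have hVs : ∀ y ∈ Vs ∪ Vt, G.Reachable x0 y := by
      rintro y (hy | hy)
      · exact hwithin 0 (by omega) x0 (hf0 ▸ hx0) y (hf0 ▸ hy)
      · exact key l le_rfl x0 (hf0 ▸ hx0) y (hfl ▸ hy)
    exact (hVs x hx).symm.trans (hVs y hy)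
  · intro hreach
    obtain ⟨r, hr⟩ := hconnT.1
    obtain ⟨s0, hs0⟩ := hconnS.1
    obtain ⟨w⟩ : G.Reachable s0 r :=
      hreach s0 (Set.mem_union_left _ hs0) r (Set.mem_union_right _ hr)
    obtain ⟨S', hrec1, hrS'⟩ := recon_to_vertex Vs w hconnS hs0
    have hconnS' : Conn G S' := recon_conn hrec1 hconnS
    have hcardS' : S'.ncard = Vt.ncard := (recon_ncard hrec1).trans hcard
    have hrec2 : Recon G S' Vt :=
      recon_grow hconnT (Vt \ {r}).ncard {r} S' rfl hconnS' (conn_singleton r)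
        (Set.singleton_subset_iff.mpr hrS') (Set.singleton_subset_iff.mpr hr) hcardS'
    obtain ⟨l, f, hf0, hfl, hinv, hstep⟩ := recon_to_seq (hrec1.trans hrec2) hconnS
    exact ⟨l, f, hf0, hfl, fun k hk => ⟨conn_iff.mpr (hinv k hk).1, (hinv k hk).2⟩, hstep⟩

end Stmt9
end

section
/- Let G be a simple graph and let i, j be positive integers. For a hub set H ⊆ V(G) with |H| = i and |C(H)| ≥ j, let S(H) = { H ∪ T : T ⊆ C(H), |T| = j }. Suppose H_a and H_b are two distinct hub sets of size i with |C(H_a)| ≥ j and |C(H_b)| ≥ j, and suppose there exist V_a ∈ S(H_a) and V_b ∈ S(H_b) with |V_a \ V_b| ≤ 1 and |V_b \ V_a| ≤ 1. Then for every pair of vertex subsets W_1, W_2 ∈ S(H_a) ∪ S(H_b), there exists a reconfiguration sequence under the TJ rule from W_1 to W_2 in which every vertex subset is a feasible solution of the spanning variant for the (i,j)-biclique property. -/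
namespace Stmt12

variable {V : Type*}

/-- `C(H)`: the set of common neighbors in `G` of all vertices of `H`. -/
def commonNbrs (G : SimpleGraph V) (H : Set V) : Set V := {v | ∀ h ∈ H, G.Adj h v}

/-- `W ∈ S(H)`, i.e. `W = H ∪ T` for some `T ⊆ C(H)` with `|T| = j`. -/
def InS (G : SimpleGraph V) (j : ℕ) (H W : Set V) : Prop :=
  ∃ T ⊆ commonNbrs G H, T.ncard = j ∧ W = H ∪ T

/-- `W` is a feasible solution of the spanning variant for the `(i,j)`-biclique property:
the induced subgraph `G[W]` contains a spanning `(i,j)`-biclique. -/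
def SpanBiclique (G : SimpleGraph V) (i j : ℕ) (W : Set V) : Prop :=
  ∃ A B : Set V, Disjoint A B ∧ A ∪ B = W ∧ A.ncard = i ∧ B.ncard = j ∧
    ∀ a ∈ A, ∀ b ∈ B, G.Adj a b

/-- A single token-jumping (TJ) step on vertex subsets. -/
def TJStepV (V1 V2 : Set V) : Prop :=
  ∃ u v, u ∈ V1 ∧ v ∉ V1 ∧ V2 = (V1 \ {u}) ∪ {v}

/-- There is a reconfiguration sequence under the TJ rule from `Ws` to `Wt` in which
every vertex subset satisfies the property `P`. -/
def TJReachV (P : Set V → Prop) (Ws Wt : Set V) : Prop :=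
  ∃ (l : ℕ) (f : ℕ → Set V), f 0 = Ws ∧ f l = Wt ∧
    (∀ k ≤ l, P (f k)) ∧ ∀ k < l, TJStepV (f k) (f (k + 1))

lemma mem_commonNbrs_notMem (G : SimpleGraph V) {H : Set V} {v : V}
    (hv : v ∈ commonNbrs G H) : v ∉ H := fun hvH => G.irrefl (hv v hvH)

lemma disj_hub (G : SimpleGraph V) {H T : Set V} (hT : T ⊆ commonNbrs G H) :
    Disjoint H T := by
  rw [Set.disjoint_right]
  intro v hvT
  exact mem_commonNbrs_notMem G (hT hvT)

lemma feas (G : SimpleGraph V) {i j : ℕ} {H T : Set V} (hH : H.ncard = i)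
    (hT : T ⊆ commonNbrs G H) (hTc : T.ncard = j) : SpanBiclique G i j (H ∪ T) :=
  ⟨H, T, disj_hub G hT, rfl, hH, hTc, fun a ha b hb => hT hb a ha⟩

lemma reach_refl {P : Set V → Prop} {W : Set V} (hP : P W) : TJReachV P W W :=
  ⟨0, fun _ => W, rfl, rfl, fun _ _ => hP, fun k hk => absurd hk (Nat.not_lt_zero k)⟩

lemma reach_prepend {P : Set V → Prop} {W1 W2 W3 : Set V} (h1 : P W1)
    (hs : TJStepV W1 W2) (hr : TJReachV P W2 W3) : TJReachV P W1 W3 := by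
  obtain ⟨l, g, hg0, hgl, hgP, hgS⟩ := hr
  refine ⟨l + 1, fun k => if k = 0 then W1 else g (k - 1), by simp, by simp [hgl], ?_, ?_⟩
  · intro k hk
    by_cases h : k = 0
    · simpa [h] using h1
    · simp only [h, if_false]
      exact hgP (k - 1) (by omega)
  · intro k hk
    by_cases h : k = 0
    · subst h
      simpa [hg0] using hs
    · simp only [h, if_false, Nat.add_one_ne_zero]
      have e1 : k + 1 - 1 = k - 1 + 1 := by omega
      rw [e1]
      exact hgS (k - 1) (by omega)

lemma reach_trans {P : Set V → Prop} {W1 W2 W3 : Set V}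
    (h12 : TJReachV P W1 W2) (h23 : TJReachV P W2 W3) : TJReachV P W1 W3 := by
  obtain ⟨l1, f, hf0, hfl, hfP, hfS⟩ := h12
  induction l1 generalizing W1 f with
  | zero =>
      rw [hf0] at hfl
      rwa [hfl]
  | succ m ih =>
      refine reach_prepend (hf0 ▸ hfP 0 (by omega)) (hf0 ▸ hfS 0 (by omega)) ?_
      exact ih (fun k => f (k + 1)) rfl hfl (fun k hk => hfP (k + 1) (by omega))
        (fun k hk => hfS (k + 1) (by omega))

lemma reach_within [Fintype V] (G : SimpleGraph V) (i j : ℕ) (H : Set V) (hH : H.ncard = i) :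
    ∀ n (T1 T2 : Set V), T1 ⊆ commonNbrs G H → T2 ⊆ commonNbrs G H →
    T1.ncard = j → T2.ncard = j → (T1 \ T2).ncard = n →
    TJReachV (SpanBiclique G i j) (H ∪ T1) (H ∪ T2) := by
  intro n
  induction n with
  | zero =>
      intro T1 T2 h1 h2 c1 c2 hd
      have hsub : T1 ⊆ T2 := by
        rw [← Set.diff_eq_empty]
        exact (Set.ncard_eq_zero (Set.toFinite _)).mp hd
      have heq : T1 = T2 := Set.eq_of_subset_of_ncard_le hsub (by rw [c1, c2])
      rw [heq]
      exact reach_refl (feas G hH h2 c2)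
  | succ n ih =>
      intro T1 T2 h1 h2 c1 c2 hd
      obtain ⟨u, hu⟩ : (T1 \ T2).Nonempty := by
        rw [Set.nonempty_iff_ne_empty]
        intro h
        rw [h, Set.ncard_empty] at hd
        omega
      obtain ⟨v, hv⟩ : (T2 \ T1).Nonempty := by
        rw [Set.nonempty_iff_ne_empty]
        intro h
        have hsub : T2 ⊆ T1 := Set.diff_eq_empty.mp h
        have heq : T2 = T1 := Set.eq_of_subset_of_ncard_le hsub (by rw [c1, c2])
        rw [← heq, Set.diff_self, Set.ncard_empty] at hd
        omega
      set T1' : Set V := insert v (T1 \ {u}) with hT1'def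
      have huT1 : u ∈ T1 := hu.1
      have hvT2 : v ∈ T2 := hv.1
      have hvT1 : v ∉ T1 := hv.2
      have hT1'sub : T1' ⊆ commonNbrs G H := by
        intro x hx
        rcases Set.mem_insert_iff.mp hx with rfl | hx'
        · exact h2 hvT2
        · exact h1 hx'.1
      have hT1'card : T1'.ncard = j := by
        rw [hT1'def, Set.ncard_insert_of_notMem (fun h => hvT1 h.1) (Set.toFinite _),
          Set.ncard_diff_singleton_add_one huT1]
        exact c1
      have hdiff : T1' \ T2 = (T1 \ T2) \ {u} := by
        ext x
        simp only [hT1'def, Set.mem_diff, Set.mem_insert_iff, Set.mem_singleton_iff]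
        constructor
        · rintro ⟨rfl | ⟨hx1, hxu⟩, hx2⟩
          · exact absurd hvT2 hx2
          · exact ⟨⟨hx1, hx2⟩, hxu⟩
        · rintro ⟨⟨hx1, hx2⟩, hxu⟩
          exact ⟨Or.inr ⟨hx1, hxu⟩, hx2⟩
      have hdc : (T1' \ T2).ncard = n := by
        rw [hdiff, Set.ncard_diff_singleton_of_mem hu, hd]
        omega
      have huH : u ∉ H := mem_commonNbrs_notMem G (h1 huT1)
      have hvH : v ∉ H := mem_commonNbrs_notMem G (h2 hvT2)
      have hstep : TJStepV (H ∪ T1) (H ∪ T1') := by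
        refine ⟨u, v, Or.inr huT1, ?_, ?_⟩
        · rintro (h | h)
          · exact hvH h
          · exact hvT1 h
        · rw [Set.union_diff_distrib, Set.diff_singleton_eq_self huH, Set.union_assoc,
            Set.union_singleton]
      exact reach_prepend (feas G hH h1 c1) hstep (ih T1' T2 hT1'sub h2 hT1'card c2 hdc)

theorem stmt12 [Fintype V] (G : SimpleGraph V) (i j : ℕ) (hi : 1 ≤ i) (hj : 1 ≤ j)
    (Ha Hb : Set V) (hne : Ha ≠ Hb)
    (hHa : Ha.ncard = i) (hHb : Hb.ncard = i)
    (hCa : j ≤ (commonNbrs G Ha).ncard) (hCb : j ≤ (commonNbrs G Hb).ncard)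
    (hclose : ∃ Va Vb, InS G j Ha Va ∧ InS G j Hb Vb ∧
      (Va \ Vb).ncard ≤ 1 ∧ (Vb \ Va).ncard ≤ 1) :
    ∀ W1 W2 : Set V, (InS G j Ha W1 ∨ InS G j Hb W1) → (InS G j Ha W2 ∨ InS G j Hb W2) →
      TJReachV (SpanBiclique G i j) W1 W2 := by
  obtain ⟨Va, Vb, ⟨Ta, hTa, cTa, hVa⟩, ⟨Tb, hTb, cTb, hVb⟩, hab, hba⟩ := hclose
  have feasVa : SpanBiclique G i j Va := hVa ▸ feas G hHa hTa cTa
  have feasVb : SpanBiclique G i j Vb := hVb ▸ feas G hHb hTb cTb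
  have cVa : Va.ncard = i + j := by
    rw [hVa, Set.ncard_union_eq (disj_hub G hTa) (Set.toFinite _) (Set.toFinite _), hHa, cTa]
  have cVb : Vb.ncard = i + j := by
    rw [hVb, Set.ncard_union_eq (disj_hub G hTb) (Set.toFinite _) (Set.toFinite _), hHb, cTb]
  -- bridge between Va and Vb
  have bridge : TJReachV (SpanBiclique G i j) Va Vb ∧ TJReachV (SpanBiclique G i j) Vb Va := by
    by_cases hVab : Va = Vb
    · rw [hVab]
      exact ⟨reach_refl feasVb, reach_refl feasVb⟩
    · obtain ⟨u, hu⟩ : (Va \ Vb).Nonempty := by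
        rw [Set.nonempty_iff_ne_empty]
        intro h
        exact hVab (Set.eq_of_subset_of_ncard_le (Set.diff_eq_empty.mp h) (by rw [cVa, cVb]))
      obtain ⟨v, hv⟩ : (Vb \ Va).Nonempty := by
        rw [Set.nonempty_iff_ne_empty]
        intro h
        exact hVab (Set.eq_of_subset_of_ncard_le (Set.diff_eq_empty.mp h)
          (by rw [cVa, cVb])).symm
      have h1 : Va \ Vb = {u} := by
        obtain ⟨a, ha⟩ := Set.ncard_eq_one.mp (le_antisymm hab
          ((Set.ncard_pos (Set.toFinite _)).mpr ⟨u, hu⟩))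
        rw [ha] at hu ⊢
        rw [Set.mem_singleton_iff] at hu
        rw [hu]
      have h2 : Vb \ Va = {v} := by
        obtain ⟨a, ha⟩ := Set.ncard_eq_one.mp (le_antisymm hba
          ((Set.ncard_pos (Set.toFinite _)).mpr ⟨v, hv⟩))
        rw [ha] at hv ⊢
        rw [Set.mem_singleton_iff] at hv
        rw [hv]
      have h3 : Va \ {u} = Vb ∩ Va := by
        rw [← h1, Set.diff_diff_right_self, Set.inter_comm]
      have h4 : Vb \ {v} = Vb ∩ Va := by
        rw [← h2, Set.diff_diff_right_self]
      have hVbeq : Vb = Va \ {u} ∪ {v} := by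
        rw [h3, ← h2, Set.inter_union_diff]
      have hVaeq : Va = Vb \ {v} ∪ {u} := by
        rw [h4, Set.inter_comm, ← h1, Set.inter_union_diff]
      have hstepab : TJStepV Va Vb := ⟨u, v, hu.1, hv.2, hVbeq⟩
      have hstepba : TJStepV Vb Va := ⟨v, u, hv.1, hu.2, hVaeq⟩
      exact ⟨reach_prepend feasVa hstepab (reach_refl feasVb),
        reach_prepend feasVb hstepba (reach_refl feasVa)⟩
  have toA : ∀ W, InS G j Ha W → TJReachV (SpanBiclique G i j) W Va := by
    rintro W ⟨T, hT, cT, rfl⟩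
    rw [hVa]
    exact reach_within G i j Ha hHa _ T Ta hT hTa cT cTa rfl
  have fromA : ∀ W, InS G j Ha W → TJReachV (SpanBiclique G i j) Va W := by
    rintro W ⟨T, hT, cT, rfl⟩
    rw [hVa]
    exact reach_within G i j Ha hHa _ Ta T hTa hT cTa cT rfl
  have toB : ∀ W, InS G j Hb W → TJReachV (SpanBiclique G i j) W Vb := by
    rintro W ⟨T, hT, cT, rfl⟩
    rw [hVb]
    exact reach_within G i j Hb hHb _ T Tb hT hTb cT cTb rfl
  have fromB : ∀ W, InS G j Hb W → TJReachV (SpanBiclique G i j) Vb W := by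
    rintro W ⟨T, hT, cT, rfl⟩
    rw [hVb]
    exact reach_within G i j Hb hHb _ Tb T hTb hT cTb cT rfl
  rintro W1 W2 (h1 | h1) (h2 | h2)
  · exact reach_trans (toA W1 h1) (fromA W2 h2)
  · exact reach_trans (toA W1 h1) (reach_trans bridge.1 (fromB W2 h2))
  · exact reach_trans (toB W1 h1) (reach_trans bridge.2 (fromA W2 h2))
  · exact reach_trans (toB W1 h1) (fromB W2 h2)

end Stmt12
end

section
/- Let G be a simple graph and let i < j be positive integers. Call H ⊆ V(G) a hub set if |H| = i and |C(H)| ≥ j, and for each hub set H let S(H) = { H ∪ T : T ⊆ C(H), |T| = j }. Define the auxiliary graph A whose nodes are the hub sets, with two distinct hub sets H_a and H_b adjacent if and only if there exist V_a ∈ S(H_a) and V_b ∈ S(H_b) with |V_a \ V_b| ≤ 1 and |V_b \ V_a| ≤ 1. Let V_s ∈ S(H_s) and V_t ∈ S(H_t). Then there exists a reconfiguration sequence under the TJ rule from V_s to V_t in which every vertex subset is a feasible solution of the spanning variant for the (i,j)-biclique property if and only if there is a walk in A from H_s to H_t (including the trivial walk when H_s = H_t). -/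
namespace Stmt13

variable {V : Type*}

/-- `C(H)`: the set of common neighbors in `G` of all vertices of `H`. -/
def commonNbrs (G : SimpleGraph V) (H : Set V) : Set V := {v | ∀ h ∈ H, G.Adj h v}

/-- `H` is a hub set: `|H| = i` and `|C(H)| ≥ j`. -/
def IsHub (G : SimpleGraph V) (i j : ℕ) (H : Set V) : Prop :=
  H.ncard = i ∧ j ≤ (commonNbrs G H).ncard

/-- `W ∈ S(H)`, i.e. `W = H ∪ T` for some `T ⊆ C(H)` with `|T| = j`. -/
def InS (G : SimpleGraph V) (j : ℕ) (H W : Set V) : Prop :=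
  ∃ T ⊆ commonNbrs G H, T.ncard = j ∧ W = H ∪ T

/-- Adjacency in the auxiliary graph `A`: two distinct hub sets `Ha`, `Hb` are adjacent
iff there exist `Va ∈ S(Ha)` and `Vb ∈ S(Hb)` with `|Va \ Vb| ≤ 1` and `|Vb \ Va| ≤ 1`. -/
def AdjA (G : SimpleGraph V) (i j : ℕ) (Ha Hb : Set V) : Prop :=
  Ha ≠ Hb ∧ IsHub G i j Ha ∧ IsHub G i j Hb ∧
    ∃ Va Vb, InS G j Ha Va ∧ InS G j Hb Vb ∧
      (Va \ Vb).ncard ≤ 1 ∧ (Vb \ Va).ncard ≤ 1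

/-- `W` is a feasible solution of the spanning variant for the `(i,j)`-biclique property:
the induced subgraph `G[W]` contains a spanning `(i,j)`-biclique. -/
def SpanBiclique (G : SimpleGraph V) (i j : ℕ) (W : Set V) : Prop :=
  ∃ A B : Set V, Disjoint A B ∧ A ∪ B = W ∧ A.ncard = i ∧ B.ncard = j ∧
    ∀ a ∈ A, ∀ b ∈ B, G.Adj a b

/-- A single token-jumping (TJ) step on vertex subsets. -/
def TJStepV (V1 V2 : Set V) : Prop :=
  ∃ u v, u ∈ V1 ∧ v ∉ V1 ∧ V2 = (V1 \ {u}) ∪ {v}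

/-- There is a reconfiguration sequence under the TJ rule from `Ws` to `Wt` in which
every vertex subset satisfies the property `P`. -/
def TJReachV (P : Set V → Prop) (Ws Wt : Set V) : Prop :=
  ∃ (l : ℕ) (f : ℕ → Set V), f 0 = Ws ∧ f l = Wt ∧
    (∀ k ≤ l, P (f k)) ∧ ∀ k < l, TJStepV (f k) (f (k + 1))

section Aux

variable [Fintype V] {G : SimpleGraph V} {i j : ℕ}

lemma hub_disjoint (G : SimpleGraph V) (H : Set V) : Disjoint H (commonNbrs G H) := by
  rw [Set.disjoint_left]
  intro v hv hv'
  exact G.irrefl (hv' v hv)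

lemma aux_ncard_diff_eq {s t : Set V} (h : s.ncard = t.ncard) :
    (s \ t).ncard = (t \ s).ncard := by
  have h1 : (s \ t).ncard + (s ∩ t).ncard = s.ncard := by
    rw [← Set.ncard_union_eq (Set.disjoint_of_subset_right Set.inter_subset_right
      Set.disjoint_sdiff_left) (Set.toFinite _) (Set.toFinite _), Set.diff_union_inter]
  have h2 : (t \ s).ncard + (t ∩ s).ncard = t.ncard := by
    rw [← Set.ncard_union_eq (Set.disjoint_of_subset_right Set.inter_subset_right
      Set.disjoint_sdiff_left) (Set.toFinite _) (Set.toFinite _), Set.diff_union_inter]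
  rw [Set.inter_comm t s] at h2
  omega

lemma inS_ncard {H W : Set V} (hH : H.ncard = i) (h : InS G j H W) : W.ncard = i + j := by
  obtain ⟨T, hT, hTc, rfl⟩ := h
  rw [Set.ncard_union_eq (Set.disjoint_of_subset_right hT (hub_disjoint G H))
    (Set.toFinite _) (Set.toFinite _), hH, hTc]

lemma inS_feasible {H W : Set V} (hH : IsHub G i j H) (h : InS G j H W) :
    SpanBiclique G i j W := by
  obtain ⟨T, hT, hTc, rfl⟩ := h
  exact ⟨H, T, Set.disjoint_of_subset_right hT (hub_disjoint G H), rfl, hH.1, hTc,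
    fun a ha b hb => hT hb a ha⟩

lemma feasible_hub {W : Set V} (h : SpanBiclique G i j W) :
    ∃ H, IsHub G i j H ∧ InS G j H W := by
  obtain ⟨A, B, hd, hu, hA, hB, hadj⟩ := h
  have hBsub : B ⊆ commonNbrs G A := fun b hb a ha => hadj a ha b hb
  exact ⟨A, ⟨hA, hB ▸ Set.ncard_le_ncard hBsub (Set.toFinite _)⟩, ⟨B, hBsub, hB, hu.symm⟩⟩

lemma tjreach_refl {P : Set V → Prop} {W : Set V} (h : P W) : TJReachV P W W :=
  ⟨0, fun _ => W, rfl, rfl, fun _ _ => h, fun k hk => absurd hk (Nat.not_lt_zero k)⟩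

lemma tjreach_trans {P : Set V → Prop} {W1 W2 W3 : Set V}
    (h1 : TJReachV P W1 W2) (h2 : TJReachV P W2 W3) : TJReachV P W1 W3 := by
  obtain ⟨l1, f1, hf10, hf1l, hP1, hS1⟩ := h1
  obtain ⟨l2, f2, hf20, hf2l, hP2, hS2⟩ := h2
  refine ⟨l1 + l2, fun k => if k ≤ l1 then f1 k else f2 (k - l1), by simp [hf10], ?_, ?_, ?_⟩
  · by_cases h : l2 = 0
    · subst h
      simp only [Nat.add_zero, if_pos le_rfl]
      rw [hf1l, ← hf20, hf2l]
    · have h' : ¬ l1 + l2 ≤ l1 := by omega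
      simp only [if_neg h']
      rw [show l1 + l2 - l1 = l2 by omega, hf2l]
  · intro k hk
    by_cases h : k ≤ l1
    · simp only [if_pos h]; exact hP1 k h
    · simp only [if_neg h]; exact hP2 (k - l1) (by omega)
  · intro k hk
    by_cases h : k + 1 ≤ l1
    · simp only [if_pos h, if_pos (by omega : k ≤ l1)]
      exact hS1 k (by omega)
    · by_cases h' : k ≤ l1
      · have hkl : k = l1 := by omega
        subst hkl
        simp only [if_pos h', if_neg h, hf1l, ← hf20, show k + 1 - k = 1 by omega]
        exact hS2 0 (by omega)
      · simp only [if_neg h, if_neg h']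
        rw [show k + 1 - l1 = (k - l1) + 1 by omega]
        exact hS2 (k - l1) (by omega)

lemma tjreach_single {P : Set V → Prop} {W1 W2 : Set V}
    (h : TJStepV W1 W2) (h1 : P W1) (h2 : P W2) : TJReachV P W1 W2 := by
  refine ⟨1, fun k => if k = 0 then W1 else W2, rfl, rfl, ?_, ?_⟩
  · intro k hk
    interval_cases k <;> simpa
  · intro k hk
    interval_cases k
    simpa using h

lemma step_of_diffs {Va Vb : Set V} (hcard : Va.ncard = Vb.ncard) (hne : Va ≠ Vb)
    (h1 : (Va \ Vb).ncard ≤ 1) : TJStepV Va Vb := by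
  have h2 : (Vb \ Va).ncard ≤ 1 := aux_ncard_diff_eq hcard ▸ h1
  have hne0 : (Va \ Vb).ncard ≠ 0 := by
    intro h0
    rw [Set.ncard_eq_zero (Set.toFinite _)] at h0
    have hsub : Va ⊆ Vb := by
      intro x hx
      by_contra hxb
      exact absurd (Set.mem_diff_of_mem hx hxb) (h0 ▸ Set.notMem_empty x)
    exact hne (Set.eq_of_subset_of_ncard_le hsub hcard.ge (Set.toFinite _))
  have e1 : (Va \ Vb).ncard = 1 := by omega
  have e2 : (Vb \ Va).ncard = 1 := by rw [← aux_ncard_diff_eq hcard]; omega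
  obtain ⟨u, hu⟩ := Set.ncard_eq_one.mp e1
  obtain ⟨v, hv⟩ := Set.ncard_eq_one.mp e2
  have hu' : ∀ x, x ∈ Va ∧ x ∉ Vb ↔ x = u := fun x => by
    simpa using Set.ext_iff.mp hu x
  have hv' : ∀ x, x ∈ Vb ∧ x ∉ Va ↔ x = v := fun x => by
    simpa using Set.ext_iff.mp hv x
  refine ⟨u, v, ((hu' u).mpr rfl).1, ((hv' v).mpr rfl).2, ?_⟩
  ext x
  simp only [Set.mem_union, Set.mem_diff, Set.mem_singleton_iff]
  constructor
  · intro hx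
    by_cases hxa : x ∈ Va
    · left
      refine ⟨hxa, ?_⟩
      intro hxu
      exact (hxu ▸ (hu' u).mpr rfl).2 hx
    · right; exact (hv' x).mp ⟨hx, hxa⟩
  · rintro (⟨hxa, hxu⟩ | rfl)
    · by_contra hxb
      exact hxu ((hu' x).mp ⟨hxa, hxb⟩)
    · exact ((hv' _).mpr rfl).1

lemma withinS {H : Set V} (hH : IsHub G i j H) :
    ∀ n T1 T2, T1 ⊆ commonNbrs G H → T2 ⊆ commonNbrs G H → T1.ncard = j → T2.ncard = j →
      (T1 \ T2).ncard = n → TJReachV (SpanBiclique G i j) (H ∪ T1) (H ∪ T2) := by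
  intro n
  induction n with
  | zero =>
    intro T1 T2 h1 h2 hc1 hc2 hd
    have hsub : T1 ⊆ T2 := by
      intro x hx
      by_contra hxb
      exact absurd (Set.mem_diff_of_mem hx hxb)
        (((Set.ncard_eq_zero (Set.toFinite _)).mp hd) ▸ Set.notMem_empty x)
    have heq : T1 = T2 := Set.eq_of_subset_of_ncard_le hsub (by omega) (Set.toFinite _)
    subst heq
    exact tjreach_refl (inS_feasible hH ⟨T1, h1, hc1, rfl⟩)
  | succ n ih =>
    intro T1 T2 h1 h2 hc1 hc2 hd
    obtain ⟨u, hu⟩ := (Set.ncard_pos (Set.toFinite _)).mp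
      (show 0 < (T1 \ T2).ncard by omega)
    have hd2 : (T2 \ T1).ncard = n + 1 := by
      rw [← aux_ncard_diff_eq (hc1.trans hc2.symm)]; omega
    obtain ⟨v, hv⟩ := (Set.ncard_pos (Set.toFinite _)).mp
      (show 0 < (T2 \ T1).ncard by omega)
    set T1' := insert v (T1 \ {u}) with hT1'
    have huT1 : u ∈ T1 := hu.1
    have hvC : v ∈ commonNbrs G H := h2 hv.1
    have hvT1 : v ∉ T1 := hv.2
    have h1' : T1' ⊆ commonNbrs G H := by
      intro x hx
      rcases Set.mem_insert_iff.mp hx with rfl | hx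
      · exact hvC
      · exact h1 hx.1
    have hc1' : T1'.ncard = j := by
      rw [hT1', Set.ncard_insert_of_notMem (fun hx => hvT1 hx.1) (Set.toFinite _)]
      have := Set.ncard_diff_singleton_add_one huT1 (Set.toFinite T1)
      omega
    have hd' : (T1' \ T2).ncard = n := by
      have heq : T1' \ T2 = (T1 \ T2) \ {u} := by
        ext x
        simp only [hT1', Set.mem_insert_iff, Set.mem_diff, Set.mem_singleton_iff]
        constructor
        · rintro ⟨rfl | ⟨hx1, hxu⟩, hx2⟩
          · exact absurd hv.1 hx2
          · exact ⟨⟨hx1, hx2⟩, hxu⟩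
        · rintro ⟨⟨hx1, hx2⟩, hxu⟩
          exact ⟨Or.inr ⟨hx1, hxu⟩, hx2⟩
      rw [heq]
      have := Set.ncard_diff_singleton_add_one hu (Set.toFinite _)
      omega
    have hstep : TJStepV (H ∪ T1) (H ∪ T1') := by
      refine ⟨u, v, Or.inr huT1, ?_, ?_⟩
      · rintro (hvH | hvT)
        · exact Set.disjoint_left.mp (hub_disjoint G H) hvH hvC
        · exact hvT1 hvT
      · have huH : u ∉ H := fun hx => Set.disjoint_left.mp (hub_disjoint G H) hx (h1 huT1)
        ext x
        simp only [hT1', Set.mem_union, Set.mem_diff, Set.mem_insert_iff,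
          Set.mem_singleton_iff]
        constructor
        · rintro (hxH | rfl | ⟨hx1, hxu⟩)
          · exact Or.inl ⟨Or.inl hxH, fun h => huH (h ▸ hxH)⟩
          · exact Or.inr rfl
          · exact Or.inl ⟨Or.inr hx1, hxu⟩
        · rintro (⟨hxH | hx1, hxu⟩ | rfl)
          · exact Or.inl hxH
          · exact Or.inr (Or.inr ⟨hx1, hxu⟩)
          · exact Or.inr (Or.inl rfl)
    exact tjreach_trans
      (tjreach_single hstep (inS_feasible hH ⟨T1, h1, hc1, rfl⟩)
        (inS_feasible hH ⟨T1', h1', hc1', rfl⟩))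
      (ih T1' T2 h1' h2 hc1' hc2 hd')

lemma reach_of_inS {H W1 W2 : Set V} (hH : IsHub G i j H)
    (h1 : InS G j H W1) (h2 : InS G j H W2) : TJReachV (SpanBiclique G i j) W1 W2 := by
  obtain ⟨T1, hT1, hc1, rfl⟩ := h1
  obtain ⟨T2, hT2, hc2, rfl⟩ := h2
  exact withinS hH _ T1 T2 hT1 hT2 hc1 hc2 rfl

lemma link {Ha Hb Va Vb : Set V} (hA : IsHub G i j Ha) (hB : IsHub G i j Hb)
    (ha : InS G j Ha Va) (hb : InS G j Hb Vb)
    (d1 : (Va \ Vb).ncard ≤ 1) (d2 : (Vb \ Va).ncard ≤ 1) :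
    Relation.ReflTransGen (AdjA G i j) Ha Hb := by
  rcases eq_or_ne Ha Hb with rfl | h
  · exact Relation.ReflTransGen.refl
  · exact Relation.ReflTransGen.single ⟨h, hA, hB, Va, Vb, ha, hb, d1, d2⟩

lemma fwd : ∀ (l : ℕ) (f : ℕ → Set V), (∀ k ≤ l, SpanBiclique G i j (f k)) →
    (∀ k < l, TJStepV (f k) (f (k + 1))) →
    ∀ Ha Hb, IsHub G i j Ha → IsHub G i j Hb → InS G j Ha (f 0) → InS G j Hb (f l) →
    Relation.ReflTransGen (AdjA G i j) Ha Hb := by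
  intro l
  induction l with
  | zero =>
    intro f _ _ Ha Hb hA hB ha hb
    exact link hA hB ha hb (by rw [Set.diff_self, Set.ncard_empty]; omega)
      (by rw [Set.diff_self, Set.ncard_empty]; omega)
  | succ l ih =>
    intro f hP hS Ha Hb hA hB ha hb
    obtain ⟨H1, hH1, hIn1⟩ := feasible_hub (hP 1 (by omega))
    obtain ⟨u, v, hu, hv, heq⟩ := hS 0 (by omega)
    have d1 : (f 0 \ f 1).ncard ≤ 1 := by
      have hset : f 0 \ f 1 = {u} := by
        rw [heq]; ext x
        simp only [Set.mem_diff, Set.mem_union, Set.mem_singleton_iff]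
        constructor
        · rintro ⟨hx0, hx1⟩
          by_contra hxu
          exact hx1 (Or.inl ⟨hx0, hxu⟩)
        · rintro rfl
          refine ⟨hu, ?_⟩
          rintro (⟨_, h⟩ | h)
          · exact h rfl
          · exact hv (h ▸ hu)
      rw [hset, Set.ncard_singleton]
    have d2 : (f 1 \ f 0).ncard ≤ 1 := by
      have hset : f 1 \ f 0 = {v} := by
        rw [heq]; ext x
        simp only [Set.mem_union, Set.mem_diff, Set.mem_singleton_iff]
        constructor
        · rintro ⟨⟨hx0, _⟩ | rfl, hx⟩
          · exact absurd hx0 hx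
          · rfl
        · rintro rfl
          exact ⟨Or.inr rfl, hv⟩
      rw [hset, Set.ncard_singleton]
    exact (link hA hH1 ha hIn1 d1 d2).trans
      (ih (fun k => f (k + 1)) (fun k hk => hP (k + 1) (by omega))
        (fun k hk => hS (k + 1) (by omega)) H1 Hb hH1 hB hIn1 hb)

lemma toWalk {Ha Hb : Set V} (hA : IsHub G i j Ha)
    (h : Relation.ReflTransGen (AdjA G i j) Ha Hb) :
    ∃ (l : ℕ) (g : ℕ → Set V), g 0 = Ha ∧ g l = Hb ∧
      (∀ k ≤ l, IsHub G i j (g k)) ∧ ∀ k < l, AdjA G i j (g k) (g (k + 1)) := by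
  induction h with
  | refl => exact ⟨0, fun _ => Ha, rfl, rfl, fun _ _ => hA, fun k hk => absurd hk (by omega)⟩
  | @tail b c hwalk hadj ih =>
    obtain ⟨l, g, hg0, hgl, hHub, hAdj⟩ := ih
    refine ⟨l + 1, fun k => if k ≤ l then g k else c, by simp [hg0], ?_, ?_, ?_⟩
    · simp
    · intro k hk
      by_cases h' : k ≤ l
      · simp only [if_pos h']; exact hHub k h'
      · simp only [if_neg h']; exact hadj.2.2.1
    · intro k hk
      by_cases h' : k + 1 ≤ l
      · simp only [if_pos h', if_pos (by omega : k ≤ l)]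
        exact hAdj k (by omega)
      · have hkl : k = l := by omega
        subst hkl
        simp only [if_pos le_rfl, if_neg h', hgl]
        exact hadj

lemma bwd : ∀ (l : ℕ) (g : ℕ → Set V), (∀ k ≤ l, IsHub G i j (g k)) →
    (∀ k < l, AdjA G i j (g k) (g (k + 1))) →
    ∀ W0 Wl, InS G j (g 0) W0 → InS G j (g l) Wl →
    TJReachV (SpanBiclique G i j) W0 Wl := by
  intro l
  induction l with
  | zero =>
    intro g hHub _ W0 Wl h0 hl
    exact reach_of_inS (hHub 0 le_rfl) h0 hl
  | succ l ih =>
    intro g hHub hAdj W0 Wl h0 hl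
    obtain ⟨hne, hub0, hub1, Va, Vb, hVa, hVb, d1, d2⟩ := hAdj 0 (by omega)
    have r1 : TJReachV (SpanBiclique G i j) W0 Va :=
      reach_of_inS (hHub 0 (by omega)) h0 hVa
    have r2 : TJReachV (SpanBiclique G i j) Va Vb := by
      rcases eq_or_ne Va Vb with rfl | hVab
      · exact tjreach_refl (inS_feasible hub0 hVa)
      · exact tjreach_single
          (step_of_diffs (by rw [inS_ncard hub0.1 hVa, inS_ncard hub1.1 hVb]) hVab d1)
          (inS_feasible hub0 hVa) (inS_feasible hub1 hVb)
    have r3 := ih (fun k => g (k + 1)) (fun k hk => hHub (k + 1) (by omega))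
      (fun k hk => hAdj (k + 1) (by omega)) Vb Wl hVb hl
    exact tjreach_trans r1 (tjreach_trans r2 r3)

end Aux

theorem stmt13 [Fintype V] (G : SimpleGraph V) (i j : ℕ) (hi : 1 ≤ i) (hij : i < j)
    (Hs Ht : Set V) (hHs : IsHub G i j Hs) (hHt : IsHub G i j Ht)
    (Vs Vt : Set V) (hVs : InS G j Hs Vs) (hVt : InS G j Ht Vt) :
    TJReachV (SpanBiclique G i j) Vs Vt ↔
      ∃ (l : ℕ) (g : ℕ → Set V), g 0 = Hs ∧ g l = Ht ∧
        (∀ k ≤ l, IsHub G i j (g k)) ∧ ∀ k < l, AdjA G i j (g k) (g (k + 1)) := by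
  constructor
  · rintro ⟨l, f, hf0, hfl, hP, hS⟩
    exact toWalk hHs (fwd l f hP hS Hs Ht hHs hHt (by rw [hf0]; exact hVs)
      (by rw [hfl]; exact hVt))
  · rintro ⟨l, g, hg0, hgl, hHub, hAdj⟩
    exact bwd l g hHub hAdj Vs Vt (by rw [hg0]; exact hVs) (by rw [hgl]; exact hVt)

end Stmt13
end

section
/- Let G be a simple graph with distinct vertices s, t at distance d, such that every vertex of G lies on some shortest s-t path and no edge of G joins two vertices in the same layer. Let G' be obtained from G by adding four new vertices s_1, s_2, t_1, t_2 and four new edges s_2s_1, s_1s, tt_1, t_1t_2. Let V_s be the vertex set of a shortest s-t path in G and let V'_s = V_s ∪ {s_1, s_2, t_1, t_2}. Then every vertex subset V' ⊆ V(G') reachable from V'_s by a sequence of TJ steps in which every intermediate vertex subset induces a path in G' satisfies: (a) s_2, s_1, s, t, t_1, t_2 ∈ V'; and (b) V' contains exactly one vertex from each layer L_0, L_1, …, L_d of G. -/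
namespace Stmt15

/-- The vertex type of `G'`: the vertices of `G` plus four new vertices;
`Sum.inr 0 = s_1`, `Sum.inr 1 = s_2`, `Sum.inr 2 = t_1`, `Sum.inr 3 = t_2`. -/
abbrev Wt (V : Type*) := V ⊕ Fin 4

variable {V : Type*}

/-- `v` lies on some shortest `s`-`t` path of `G`. -/
def OnShortest (G : SimpleGraph V) (s t v : V) : Prop :=
  G.dist s v + G.dist v t = G.dist s t

/-- The layer `L_i`: the vertices at distance `i` from `s` lying on some shortest
`s`-`t` path. -/
def Layer (G : SimpleGraph V) (s t : V) (i : ℕ) : Set V :=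
  {v | OnShortest G s t v ∧ G.dist s v = i}

/-- The graph `G'`, obtained from `G` by adding the new vertices `s_1, s_2, t_1, t_2`
and the new edges `s_2s_1`, `s_1s`, `tt_1`, `t_1t_2`. -/
def newG (G : SimpleGraph V) (s t : V) : SimpleGraph (Wt V) :=
  SimpleGraph.fromEdgeSet
    (Sym2.map Sum.inl '' G.edgeSet ∪
      {s(Sum.inr 1, Sum.inr 0), s(Sum.inr 0, Sum.inl s),
       s(Sum.inl t, Sum.inr 2), s(Sum.inr 2, Sum.inr 3)})

/-- `U` is the vertex set of a shortest `s`-`t` path of `G`. -/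
def ShortestPathSet (G : SimpleGraph V) (s t : V) (U : Set V) : Prop :=
  ∃ p : G.Walk s t, p.IsPath ∧ p.length = G.dist s t ∧ U = {v | v ∈ p.support}

/-- A graph is a (simple) path: a tree with exactly two vertices of degree one in which
every other vertex has degree two. -/
def IsPathGraph {α : Type*} (H : SimpleGraph α) : Prop :=
  H.Connected ∧ H.IsAcyclic ∧
    {v | (H.neighborSet v).ncard = 1}.ncard = 2 ∧
    ∀ v, (H.neighborSet v).ncard = 1 ∨ (H.neighborSet v).ncard = 2

/-- A single token-jumping (TJ) step on vertex subsets. -/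
def TJStepV {α : Type*} (V1 V2 : Set α) : Prop :=
  ∃ u v, u ∈ V1 ∧ v ∉ V1 ∧ V2 = (V1 \ {u}) ∪ {v}

section
variable (G : SimpleGraph V) (s t : V)

/-- The level function. -/
noncomputable def phi : Wt V → ℤ
  | Sum.inl v => (G.dist s v : ℤ)
  | Sum.inr i =>
      if i = 0 then -1 else if i = 1 then -2
      else if i = 2 then (G.dist s t : ℤ) + 1 else (G.dist s t : ℤ) + 2

variable {G s t}

lemma dist_adj_le {a b : V} (hr : G.Reachable s a) (h : G.Adj a b) :
    G.dist s b ≤ G.dist s a + 1 := by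
  obtain ⟨p, hp⟩ := hr.exists_walk_length_eq_dist
  have := SimpleGraph.dist_le (p.concat h)
  rwa [SimpleGraph.Walk.length_concat, hp] at this

section Hyp
variable (hst : s ≠ t) (hreach : G.Reachable s t) (hall : ∀ v, OnShortest G s t v)

include hst hreach in
lemma d_pos : 0 < G.dist s t :=
  Nat.pos_of_ne_zero fun h => hst (hreach.dist_eq_zero_iff.mp h)

include hst hreach hall in
lemma reach_all (v : V) : G.Reachable s v := by
  by_cases h : G.Reachable v t
  · exact hreach.trans h.symm
  · have h0 : G.dist v t = 0 := SimpleGraph.dist_eq_zero_of_not_reachable h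
    have := hall v
    unfold OnShortest at this
    by_contra h2
    have : G.dist s v = 0 := SimpleGraph.dist_eq_zero_of_not_reachable h2
    have := hall v
    unfold OnShortest at this
    have hd := d_pos hst hreach
    omega

include hall in
lemma dist_le_d (v : V) : G.dist s v ≤ G.dist s t := by
  have := hall v; unfold OnShortest at this; omega

include hall in
lemma mem_layer_dist (v : V) : v ∈ Layer G s t (G.dist s v) := ⟨hall v, rfl⟩

include hst hreach hall in
lemma layer_zero {v : V} (h : v ∈ Layer G s t 0) : v = s := by
  have h2 := h.2
  exact ((reach_all hst hreach hall v).dist_eq_zero_iff.mp h2).symm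

include hst hreach hall in
lemma layer_top {v : V} (h : v ∈ Layer G s t (G.dist s t)) : v = t := by
  have h1 := h.1; unfold OnShortest at h1
  have h2 := h.2
  have hvt : G.dist v t = 0 := by omega
  have hr : G.Reachable v t := (reach_all hst hreach hall v).symm.trans hreach
  exact hr.dist_eq_zero_iff.mp hvt


include hst hreach hall in
lemma adj_dist_cases {a b : V} (hlayer : ∀ u v, G.Adj u v → G.dist s u ≠ G.dist s v)
    (h : G.Adj a b) :
    G.dist s b = G.dist s a + 1 ∨ G.dist s a = G.dist s b + 1 := by
  have h1 := dist_adj_le (reach_all hst hreach hall a) h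
  have h2 := dist_adj_le (reach_all hst hreach hall b) h.symm
  have h3 := hlayer a b h
  omega

omit hst hreach hall in
lemma newG_adj {a b : Wt V} : (newG G s t).Adj a b ↔
    (∃ u v : V, G.Adj u v ∧ a = Sum.inl u ∧ b = Sum.inl v) ∨
    (a = Sum.inr 1 ∧ b = Sum.inr 0) ∨ (a = Sum.inr 0 ∧ b = Sum.inr 1) ∨
    (a = Sum.inr 0 ∧ b = Sum.inl s) ∨ (a = Sum.inl s ∧ b = Sum.inr 0) ∨
    (a = Sum.inl t ∧ b = Sum.inr 2) ∨ (a = Sum.inr 2 ∧ b = Sum.inl t) ∨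
    (a = Sum.inr 2 ∧ b = Sum.inr 3) ∨ (a = Sum.inr 3 ∧ b = Sum.inr 2) := by
  unfold newG
  rw [SimpleGraph.fromEdgeSet_adj]
  constructor
  · rintro ⟨hmem, hne⟩
    rcases hmem with h | h
    · obtain ⟨e, he, hmap⟩ := h
      induction e with
      | _ u v =>
        rw [Sym2.map_pair_eq, Sym2.eq_iff] at hmap
        rw [SimpleGraph.mem_edgeSet] at he
        rcases hmap with ⟨h1, h2⟩ | ⟨h1, h2⟩
        · exact Or.inl ⟨u, v, he, h1.symm, h2.symm⟩
        · exact Or.inl ⟨v, u, he.symm, h2.symm, h1.symm⟩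
    · simp only [Set.mem_insert_iff, Set.mem_singleton_iff, Sym2.eq_iff] at h
      tauto
  · rintro (⟨u, v, huv, rfl, rfl⟩ | ⟨rfl,rfl⟩|⟨rfl,rfl⟩|⟨rfl,rfl⟩|⟨rfl,rfl⟩|⟨rfl,rfl⟩|⟨rfl,rfl⟩|⟨rfl,rfl⟩|⟨rfl,rfl⟩)
    · exact ⟨Or.inl ⟨s(u, v), huv, by rw [Sym2.map_pair_eq]⟩, by simpa using huv.ne⟩
    all_goals refine ⟨Or.inr ?_, by simp⟩
    all_goals simp only [Set.mem_insert_iff, Set.mem_singleton_iff]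
    · exact Or.inl trivial
    · exact Or.inl Sym2.eq_swap
    · exact Or.inr (Or.inl trivial)
    · exact Or.inr (Or.inl Sym2.eq_swap)
    · exact Or.inr (Or.inr (Or.inl trivial))
    · exact Or.inr (Or.inr (Or.inl Sym2.eq_swap))
    · exact Or.inr (Or.inr (Or.inr trivial))
    · exact Or.inr (Or.inr (Or.inr Sym2.eq_swap))

include hst hreach hall in
lemma phi_adj (hlayer : ∀ u v, G.Adj u v → G.dist s u ≠ G.dist s v) {a b : Wt V}
    (h : (newG G s t).Adj a b) :
    phi G s t b = phi G s t a + 1 ∨ phi G s t a = phi G s t b + 1 := by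
  rcases newG_adj.mp h with ⟨u, v, huv, rfl, rfl⟩ |
    ⟨rfl,rfl⟩|⟨rfl,rfl⟩|⟨rfl,rfl⟩|⟨rfl,rfl⟩|⟨rfl,rfl⟩|⟨rfl,rfl⟩|⟨rfl,rfl⟩|⟨rfl,rfl⟩
  · have := adj_dist_cases hst hreach hall hlayer huv
    simp only [phi]
    omega
  all_goals simp [phi, SimpleGraph.dist_self] <;> omega

omit hst hreach hall in
include hall in
lemma phi_nat {a : Wt V} {m : ℕ} (hm : m ≤ G.dist s t) (h : phi G s t a = (m : ℤ)) :
    ∃ y : V, a = Sum.inl y ∧ y ∈ Layer G s t m := by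
  cases a with
  | inl y =>
    simp only [phi] at h
    refine ⟨y, rfl, hall y, ?_⟩
    exact_mod_cast h
  | inr i =>
    exfalso
    fin_cases i <;> simp [phi] at h <;> omega

omit hst hreach hall in
include hst hreach hall in
lemma crossing {W : Set (Wt V)} {a b : ↥W}
    (hlayer : ∀ u v, G.Adj u v → G.dist s u ≠ G.dist s v)
    (p : ((newG G s t).induce W).Walk a b) {i : ℤ}
    (ha : phi G s t ↑a ≤ i) (hb : i < phi G s t ↑b) :
    ∃ c c' : Wt V, c ∈ W ∧ c' ∈ W ∧ (newG G s t).Adj c c' ∧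
      phi G s t c = i ∧ phi G s t c' = i + 1 := by
  induction p with
  | nil => omega
  | @cons x y z h q ih =>
    have hadj : (newG G s t).Adj ↑x ↑y := h
    by_cases hy : phi G s t ↑y ≤ i
    · exact ih hy hb
    · push_neg at hy
      rcases phi_adj hst hreach hall hlayer hadj with h1 | h1
      · exact ⟨↑x, ↑y, x.2, y.2, hadj, by omega, by omega⟩
      · omega

omit hst hreach hall in
lemma path_not_isolated {α : Type*} {H : SimpleGraph α} (hp : IsPathGraph H) (v : α) :
    ∃ w, H.Adj v w := by
  by_contra h
  push_neg at h
  have hempty : H.neighborSet v = ∅ := by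
    ext w; simp [SimpleGraph.mem_neighborSet, h w]
  rcases hp.2.2.2 v with h1 | h1 <;> rw [hempty, Set.ncard_empty] at h1 <;> omega

omit hst hreach hall in
lemma path_not_three {α : Type*} {H : SimpleGraph α} (hp : IsPathGraph H) {v b1 b2 b3 : α}
    (h1 : H.Adj v b1) (h2 : H.Adj v b2) (h3 : H.Adj v b3)
    (h12 : b1 ≠ b2) (h13 : b1 ≠ b3) (h23 : b2 ≠ b3) : False := by
  have hsub : {b1, b2, b3} ⊆ H.neighborSet v := by
    intro x hx
    rcases hx with rfl | rfl | rfl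
    exacts [h1, h2, h3]
  have hfin : (H.neighborSet v).Finite := by
    by_contra hinf
    have := Set.Infinite.ncard hinf
    rcases hp.2.2.2 v with h | h <;> omega
  have h3c : ({b1, b2, b3} : Set α).ncard = 3 := by
    rw [Set.ncard_insert_of_notMem (by simp [h12, h13]) ((Set.finite_singleton _).insert _),
      Set.ncard_pair h23]
  have hle := Set.ncard_le_ncard hsub hfin
  rcases hp.2.2.2 v with h | h <;> omega

omit hst hreach hall in
lemma newG_adj_inl {u v : V} : (newG G s t).Adj (Sum.inl u) (Sum.inl v) ↔ G.Adj u v := by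
  rw [newG_adj]
  constructor
  · rintro (⟨a, b, hab, h1, h2⟩ | h)
    · cases h1; cases h2; exact hab
    · exfalso
      rcases h with ⟨h,h'⟩|⟨h,h'⟩|⟨h,h'⟩|⟨h,h'⟩|⟨h,h'⟩|⟨h,h'⟩|⟨h,h'⟩|⟨h,h'⟩ <;> simp_all
  · exact fun h => Or.inl ⟨u, v, h, rfl, rfl⟩

variable (G s t) in
/-- The invariant. -/
def Good (W : Set (Wt V)) : Prop :=
  Set.range (Sum.inr : Fin 4 → Wt V) ⊆ W ∧
    ∀ i ≤ G.dist s t, ∃! u : V, u ∈ Layer G s t i ∧ Sum.inl u ∈ W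

include hst hreach hall in
lemma good_inl_s {W : Set (Wt V)} (h : Good G s t W) : Sum.inl s ∈ W := by
  obtain ⟨u, ⟨hu, huW⟩, -⟩ := h.2 0 (Nat.zero_le _)
  rwa [layer_zero hst hreach hall hu] at huW

include hst hreach hall in
lemma good_inl_t {W : Set (Wt V)} (h : Good G s t W) : Sum.inl t ∈ W := by
  obtain ⟨u, ⟨hu, huW⟩, -⟩ := h.2 (G.dist s t) le_rfl
  rwa [layer_top hst hreach hall hu] at huW

include hst hreach hall in
lemma exists_layer (hlayer : ∀ u v, G.Adj u v → G.dist s u ≠ G.dist s v)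
    {W : Set (Wt V)} (hr : Set.range (Sum.inr : Fin 4 → Wt V) ⊆ W)
    (hc : ((newG G s t).induce W).Connected) {m : ℕ} (hm : m ≤ G.dist s t) :
    ∃ y, y ∈ Layer G s t m ∧ Sum.inl y ∈ W := by
  have h1 : (Sum.inr 1 : Wt V) ∈ W := hr ⟨1, rfl⟩
  have h3 : (Sum.inr 3 : Wt V) ∈ W := hr ⟨3, rfl⟩
  obtain ⟨p⟩ := hc ⟨_, h1⟩ ⟨_, h3⟩
  obtain ⟨c, c', hcW, hc'W, hadj, hc1, hc2⟩ :=
    crossing hst hreach hall hlayer p (i := (m : ℤ) - 1)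
      (by show phi G s t (Sum.inr 1) ≤ _; simp [phi]; omega)
      (by show _ < phi G s t (Sum.inr 3); simp [phi]; omega)
  obtain ⟨y, rfl, hy⟩ := phi_nat (a := c') hall hm (by omega)
  exact ⟨y, hy, hc'W⟩

include hst hreach hall in
lemma adj_consec (hlayer : ∀ u v, G.Adj u v → G.dist s u ≠ G.dist s v)
    {W : Set (Wt V)} (hG : Good G s t W)
    (hc : ((newG G s t).induce W).Connected) {i : ℕ} (hi : i + 1 ≤ G.dist s t)
    {y z : V} (hy : y ∈ Layer G s t i) (hyW : Sum.inl y ∈ W)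
    (hz : z ∈ Layer G s t (i + 1)) (hzW : Sum.inl z ∈ W) : G.Adj y z := by
  have h1 : (Sum.inr 1 : Wt V) ∈ W := hG.1 ⟨1, rfl⟩
  have h3 : (Sum.inr 3 : Wt V) ∈ W := hG.1 ⟨3, rfl⟩
  obtain ⟨p⟩ := hc ⟨_, h1⟩ ⟨_, h3⟩
  obtain ⟨c, c', hcW, hc'W, hadj, hc1, hc2⟩ :=
    crossing hst hreach hall hlayer p (i := (i : ℤ))
      (by show phi G s t (Sum.inr 1) ≤ _; simp [phi])
      (by show _ < phi G s t (Sum.inr 3); simp [phi]; omega)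
  obtain ⟨y', rfl, hy'⟩ := phi_nat (a := c) hall (by omega) hc1
  obtain ⟨z', rfl, hz'⟩ := phi_nat (a := c') hall hi (by push_cast; omega)
  obtain ⟨xu, hxu, huniq⟩ := hG.2 i (by omega)
  obtain ⟨xu', hxu', huniq'⟩ := hG.2 (i + 1) hi
  have e1 : y' = y := by rw [huniq y' ⟨hy', hcW⟩, huniq y ⟨hy, hyW⟩]
  have e2 : z' = z := by rw [huniq' z' ⟨hz', hc'W⟩, huniq' z ⟨hz, hzW⟩]
  subst e1; subst e2
  exact newG_adj_inl.mp hadj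

include hst hreach hall in
lemma no_remove_endpoint (hlayer : ∀ u v, G.Adj u v → G.dist s u ≠ G.dist s v)
    {V1 : Set (Wt V)} (hG1 : Good G s t V1)
    (hp1 : IsPathGraph ((newG G s t).induce V1)) {k : Fin 4} (hk : k = 1 ∨ k = 3)
    {w : V} (hw : Sum.inl w ∉ V1)
    (hp2 : IsPathGraph ((newG G s t).induce (V1 \ {Sum.inr k} ∪ {Sum.inl w}))) : False := by
  set V2 : Set (Wt V) := V1 \ {Sum.inr k} ∪ {Sum.inl w} with hV2
  have hmem : ∀ a : Wt V, a ∈ V2 ↔ (a ∈ V1 ∧ a ≠ Sum.inr k) ∨ a = Sum.inl w := by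
    intro a
    simp only [hV2, Set.mem_union, Set.mem_diff, Set.mem_singleton_iff]
  have hwV2 : Sum.inl w ∈ V2 := Set.mem_union_right _ rfl
  have hsV1 : Sum.inl s ∈ V1 := good_inl_s hst hreach hall hG1
  have htV1 : Sum.inl t ∈ V1 := good_inl_t hst hreach hall hG1
  have hws : w ≠ s := fun h => hw (h ▸ hsV1)
  have hwt : w ≠ t := fun h => hw (h ▸ htV1)
  obtain ⟨b, hb⟩ := path_not_isolated hp2 ⟨Sum.inl w, hwV2⟩
  have hadj : (newG G s t).Adj (Sum.inl w) ↑b := hb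
  obtain ⟨y, hby, hwy⟩ : ∃ y, (↑b : Wt V) = Sum.inl y ∧ G.Adj w y := by
    rcases newG_adj.mp hadj with ⟨u', v', huv, h1, h2⟩ | hcases
    · obtain rfl : w = u' := Sum.inl.inj h1
      exact ⟨v', h2, huv⟩
    · exfalso
      rcases hcases with ⟨h,-⟩|⟨h,-⟩|⟨h,-⟩|⟨h,-⟩|⟨h,-⟩|⟨h,-⟩|⟨h,-⟩|⟨h,-⟩ <;>
        first
          | exact hws (Sum.inl.inj h)
          | exact hwt (Sum.inl.inj h)
          | simp at h
  have hyV2 : Sum.inl y ∈ V2 := hby ▸ b.2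
  have hyV1 : Sum.inl y ∈ V1 := by
    rcases (hmem _).mp hyV2 with ⟨h, -⟩ | h
    · exact h
    · exact absurd (Sum.inl.inj h) hwy.ne'
  have hyL : y ∈ Layer G s t (G.dist s y) := mem_layer_dist hall y
  have hmd : G.dist s y ≤ G.dist s t := dist_le_d hall y
  have hd1 : 0 < G.dist s t := d_pos hst hreach
  have hkne : ∀ i : Fin 4, i ≠ k → (Sum.inr i : Wt V) ∈ V2 := fun i hik =>
    (hmem _).mpr (Or.inl ⟨hG1.1 ⟨i, rfl⟩, fun h => hik (Sum.inr.inj h)⟩)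
  obtain ⟨nlo, hnloV1, hnloV2, hnlo_adj, hnlo_phi⟩ :
      ∃ n, (n ∈ V1) ∧ n ∈ V2 ∧ (newG G s t).Adj (Sum.inl y) n ∧
        phi G s t n = (G.dist s y : ℤ) - 1 := by
    by_cases hm0 : G.dist s y = 0
    · have hys : y = s := layer_zero hst hreach hall (hm0 ▸ hyL)
      refine ⟨Sum.inr 0, hG1.1 ⟨0, rfl⟩, hkne 0 (by rcases hk with rfl | rfl <;> decide), ?_, ?_⟩
      · rw [hys]; exact newG_adj.mpr (by tauto)
      · simp [phi, hm0]
    · obtain ⟨m', hm'⟩ : ∃ m', G.dist s y = m' + 1 := ⟨G.dist s y - 1, by omega⟩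
      obtain ⟨xm, ⟨hxmL, hxmV1⟩, -⟩ := hG1.2 m' (by omega)
      have hadjxy : G.Adj xm y :=
        adj_consec hst hreach hall hlayer hG1 hp1.1 (by omega) hxmL hxmV1 (hm' ▸ hyL) hyV1
      refine ⟨Sum.inl xm, hxmV1, (hmem _).mpr (Or.inl ⟨hxmV1, by simp⟩),
        newG_adj_inl.mpr hadjxy.symm, ?_⟩
      show (G.dist s xm : ℤ) = _
      rw [hxmL.2, hm']
      push_cast; ring
  obtain ⟨nhi, hnhiV1, hnhiV2, hnhi_adj, hnhi_phi⟩ :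
      ∃ n, (n ∈ V1) ∧ n ∈ V2 ∧ (newG G s t).Adj (Sum.inl y) n ∧
        phi G s t n = (G.dist s y : ℤ) + 1 := by
    by_cases hmd' : G.dist s y = G.dist s t
    · have hyt : y = t := layer_top hst hreach hall (by rw [← hmd']; exact hyL)
      refine ⟨Sum.inr 2, hG1.1 ⟨2, rfl⟩, hkne 2 (by rcases hk with rfl | rfl <;> decide), ?_, ?_⟩
      · rw [hyt]; exact newG_adj.mpr (by tauto)
      · simp [phi, hmd']
    · obtain ⟨xm, ⟨hxmL, hxmV1⟩, -⟩ := hG1.2 (G.dist s y + 1) (by omega)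
      have hadjxy : G.Adj y xm :=
        adj_consec hst hreach hall hlayer hG1 hp1.1 (by omega) hyL hyV1 hxmL hxmV1
      refine ⟨Sum.inl xm, hxmV1, (hmem _).mpr (Or.inl ⟨hxmV1, by simp⟩),
        newG_adj_inl.mpr hadjxy, ?_⟩
      show (G.dist s xm : ℤ) = _
      rw [hxmL.2]
      push_cast; ring
  have hne1 : nlo ≠ Sum.inl w := fun h => hw (h ▸ hnloV1)
  have hne2 : nhi ≠ Sum.inl w := fun h => hw (h ▸ hnhiV1)
  have hne3 : nlo ≠ nhi := fun h => by rw [h, hnhi_phi] at hnlo_phi; omega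
  refine path_not_three hp2 (v := ⟨Sum.inl y, hyV2⟩) (b1 := ⟨nlo, hnloV2⟩)
    (b2 := ⟨nhi, hnhiV2⟩) (b3 := ⟨Sum.inl w, hwV2⟩) hnlo_adj hnhi_adj
    (newG_adj_inl.mpr hwy.symm) ?_ ?_ ?_
  · exact fun h => hne3 (congrArg Subtype.val h)
  · exact fun h => hne1 (congrArg Subtype.val h)
  · exact fun h => hne2 (congrArg Subtype.val h)

include hst hreach hall in
lemma preserve (hlayer : ∀ u v, G.Adj u v → G.dist s u ≠ G.dist s v)
    {V1 V2 : Set (Wt V)} (hG1 : Good G s t V1)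
    (hp1 : IsPathGraph ((newG G s t).induce V1))
    (hp2 : IsPathGraph ((newG G s t).induce V2))
    (hTJ : TJStepV V1 V2) : Good G s t V2 := by
  obtain ⟨u, v, hu, hv, rfl⟩ := hTJ
  have hmem : ∀ a : Wt V, a ∈ V1 \ {u} ∪ {v} ↔ (a ∈ V1 ∧ a ≠ u) ∨ a = v := by
    intro a
    simp only [Set.mem_union, Set.mem_diff, Set.mem_singleton_iff]
  obtain ⟨w, rfl⟩ : ∃ w, v = Sum.inl w := by
    cases v with
    | inl w => exact ⟨w, rfl⟩
    | inr i => exact absurd (hG1.1 ⟨i, rfl⟩) hv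
  have hsV1 : Sum.inl s ∈ V1 := good_inl_s hst hreach hall hG1
  have htV1 : Sum.inl t ∈ V1 := good_inl_t hst hreach hall hG1
  have hws : w ≠ s := fun h => hv (h ▸ hsV1)
  have hwt : w ≠ t := fun h => hv (h ▸ htV1)
  have hwL : w ∈ Layer G s t (G.dist s w) := mem_layer_dist hall w
  cases u with
  | inr k =>
    exfalso
    have hkcases : k = 0 ∨ k = 1 ∨ k = 2 ∨ k = 3 := by fin_cases k <;> simp
    rcases hkcases with rfl | rfl | rfl | rfl
    · -- s1 removed: s2 = inr 1 is isolated
      have h1V2 : (Sum.inr 1 : Wt V) ∈ V1 \ {Sum.inr 0} ∪ {Sum.inl w} :=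
        (hmem _).mpr (Or.inl ⟨hG1.1 ⟨1, rfl⟩, by simp⟩)
      obtain ⟨b, hb⟩ := path_not_isolated hp2 ⟨Sum.inr 1, h1V2⟩
      have hadj : (newG G s t).Adj (Sum.inr 1) ↑b := hb
      have hb0 : (↑b : Wt V) = Sum.inr 0 := by
        rcases newG_adj.mp hadj with ⟨u', v', -, h1, -⟩ | hcases
        · exact absurd h1 (by simp)
        · rcases hcases with ⟨-,h⟩|⟨h,-⟩|⟨h,-⟩|⟨h,-⟩|⟨h,-⟩|⟨h,-⟩|⟨h,-⟩|⟨h,-⟩ <;>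
            first | exact h | simp at h
      have := b.2
      rw [hb0] at this
      rcases (hmem _).mp this with ⟨-, h⟩ | h
      · exact h rfl
      · simp at h
    · exact no_remove_endpoint hst hreach hall hlayer hG1 hp1 (Or.inl rfl) hv hp2
    · -- t1 removed: t2 = inr 3 is isolated
      have h1V2 : (Sum.inr 3 : Wt V) ∈ V1 \ {Sum.inr 2} ∪ {Sum.inl w} :=
        (hmem _).mpr (Or.inl ⟨hG1.1 ⟨3, rfl⟩, by simp⟩)
      obtain ⟨b, hb⟩ := path_not_isolated hp2 ⟨Sum.inr 3, h1V2⟩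
      have hadj : (newG G s t).Adj (Sum.inr 3) ↑b := hb
      have hb0 : (↑b : Wt V) = Sum.inr 2 := by
        rcases newG_adj.mp hadj with ⟨u', v', -, h1, -⟩ | hcases
        · exact absurd h1 (by simp)
        · rcases hcases with ⟨h,-⟩|⟨h,-⟩|⟨h,-⟩|⟨h,-⟩|⟨h,-⟩|⟨h,-⟩|⟨h,-⟩|⟨-,h⟩ <;>
            first | exact h | simp at h
      have := b.2
      rw [hb0] at this
      rcases (hmem _).mp this with ⟨-, h⟩ | h
      · exact h rfl
      · simp at h
    · exact no_remove_endpoint hst hreach hall hlayer hG1 hp1 (Or.inr rfl) hv hp2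
  | inl z =>
    have hzV1 : Sum.inl z ∈ V1 := hu
    have hzL : z ∈ Layer G s t (G.dist s z) := mem_layer_dist hall z
    have hrange2 : Set.range (Sum.inr : Fin 4 → Wt V) ⊆ V1 \ {Sum.inl z} ∪ {Sum.inl w} := by
      rintro - ⟨i, rfl⟩
      exact (hmem _).mpr (Or.inl ⟨hG1.1 ⟨i, rfl⟩, by simp⟩)
    have hwz : G.dist s w = G.dist s z := by
      by_contra hne
      obtain ⟨y, hyL, hyW⟩ := exists_layer hst hreach hall hlayer hrange2 hp2.1
        (dist_le_d hall z)
      rcases (hmem _).mp hyW with ⟨hyV1, hyne⟩ | h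
      · obtain ⟨xu, hxu, huniq⟩ := hG1.2 (G.dist s z) (dist_le_d hall z)
        have e1 : y = xu := huniq y ⟨hyL, hyV1⟩
        have e2 : z = xu := huniq z ⟨hzL, hzV1⟩
        exact hyne (by rw [e1, e2])
      · obtain rfl : w = y := (Sum.inl.inj h).symm
        exact hne hyL.2
    refine ⟨hrange2, fun i hi => ?_⟩
    by_cases hij : i = G.dist s w
    · subst hij
      refine ⟨w, ⟨hwL, (hmem _).mpr (Or.inr rfl)⟩, fun y ⟨hyL, hyW⟩ => ?_⟩
      rcases (hmem _).mp hyW with ⟨hyV1, hyne⟩ | h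
      · exfalso
        obtain ⟨xu, hxu, huniq⟩ := hG1.2 (G.dist s w) hi
        have e1 : y = xu := huniq y ⟨hyL, hyV1⟩
        have hzL' : z ∈ Layer G s t (G.dist s w) := by rw [hwz]; exact hzL
        have e2 : z = xu := huniq z ⟨hzL', hzV1⟩
        exact hyne (by rw [e1, e2])
      · exact Sum.inl.inj h
    · obtain ⟨xi, ⟨hxiL, hxiV1⟩, huniq⟩ := hG1.2 i hi
      have hxiz : xi ≠ z := fun h => hij (by rw [← hxiL.2, h, ← hwz])
      refine ⟨xi, ⟨hxiL, (hmem _).mpr (Or.inl ⟨hxiV1, fun h => hxiz (Sum.inl.inj h)⟩)⟩,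
        fun y ⟨hyL, hyW⟩ => ?_⟩
      rcases (hmem _).mp hyW with ⟨hyV1, -⟩ | h
      · exact huniq y ⟨hyL, hyV1⟩
      · exfalso
        obtain rfl : w = y := (Sum.inl.inj h).symm
        exact hij hyL.2.symm

include hst hreach hall in
lemma dist_getVert (p : G.Walk s t) (hlen : p.length = G.dist s t)
    {n : ℕ} (hn : n ≤ p.length) : G.dist s (p.getVert n) = n := by
  have h1 : ∀ n ≤ p.length, G.dist s (p.getVert n) ≤ n := by
    intro n
    induction n with
    | zero => intro _; rw [p.getVert_zero]; simp [SimpleGraph.dist_self]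
    | succ n ih =>
      intro hn
      have hlt : n < p.length := hn
      have := dist_adj_le (reach_all hst hreach hall (p.getVert n)) (p.adj_getVert_succ hlt)
      have := ih (le_of_lt hlt)
      omega
  have h2 : ∀ c n, p.length - n ≤ c → G.dist t (p.getVert n) ≤ p.length - n := by
    intro c
    induction c with
    | zero =>
      intro n hc
      have : p.length ≤ n := by omega
      rw [p.getVert_of_length_le this]
      simp [SimpleGraph.dist_self]
    | succ c ih =>
      intro n hc
      by_cases hge : p.length ≤ n
      · rw [p.getVert_of_length_le hge]; simp [SimpleGraph.dist_self]
      · push_neg at hge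
        have h3 := ih (n + 1) (by omega)
        have h4 := dist_adj_le (s := t)
          (hreach.symm.trans (reach_all hst hreach hall (p.getVert (n + 1))))
          (p.adj_getVert_succ hge).symm
        omega
  have ha := hall (p.getVert n)
  unfold OnShortest at ha
  have hb := h1 n hn
  have hcc := h2 (p.length - n) n le_rfl
  rw [SimpleGraph.dist_comm (u := t)] at hcc
  omega

include hst hreach hall in
lemma good_init (p : G.Walk s t) (hlen : p.length = G.dist s t) :
    Good G s t (Sum.inl '' {v | v ∈ p.support} ∪ Set.range Sum.inr) := by
  constructor
  · exact Set.subset_union_right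
  · intro i hi
    have hi' : i ≤ p.length := by omega
    have hgmem : ∀ y : V, Sum.inl y ∈ Sum.inl '' {v | v ∈ p.support} ∪
        Set.range (Sum.inr : Fin 4 → Wt V) ↔ y ∈ p.support := by
      intro y
      constructor
      · rintro (⟨x, hx, hxy⟩ | ⟨j, hj⟩)
        · exact (Sum.inl.inj hxy) ▸ hx
        · exact absurd hj (by simp)
      · intro h; exact Or.inl ⟨y, h, rfl⟩
    refine ⟨p.getVert i, ⟨⟨hall _, dist_getVert hst hreach hall p hlen hi'⟩, ?_⟩, ?_⟩
    · exact (hgmem _).mpr (SimpleGraph.Walk.mem_support_iff_exists_getVert.mpr ⟨i, rfl, hi'⟩)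
    · rintro y ⟨hyL, hyW⟩
      obtain ⟨n, hgv, hn⟩ := SimpleGraph.Walk.mem_support_iff_exists_getVert.mp ((hgmem _).mp hyW)
      have : G.dist s y = n := hgv ▸ dist_getVert hst hreach hall p hlen hn
      have : n = i := by rw [← this, hyL.2]
      rw [← hgv, this]

end Hyp
end

theorem stmt15 [Fintype V] [DecidableEq V] (G : SimpleGraph V) (s t : V) (hst : s ≠ t)
    (hreach : G.Reachable s t)
    (hall : ∀ v, OnShortest G s t v)
    (hlayer : ∀ u v, G.Adj u v → G.dist s u ≠ G.dist s v)
    (Vs : Set V) (hVs : ShortestPathSet G s t Vs)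
    (V' : Set (Wt V))
    (hreached : ∃ (l : ℕ) (f : ℕ → Set (Wt V)),
      f 0 = Sum.inl '' Vs ∪ Set.range Sum.inr ∧ f l = V' ∧
      (∀ k ≤ l, IsPathGraph ((newG G s t).induce (f k))) ∧
      ∀ k < l, TJStepV (f k) (f (k + 1))) :
    (Set.range (Sum.inr : Fin 4 → Wt V) ⊆ V' ∧ Sum.inl s ∈ V' ∧ Sum.inl t ∈ V') ∧
      ∀ i ≤ G.dist s t, ∃! u : V, u ∈ Layer G s t i ∧ Sum.inl u ∈ V' := by
  obtain ⟨l, f, h0, hl, hpaths, hsteps⟩ := hreached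
  obtain ⟨p, hp, hlen, hVsEq⟩ := hVs
  have hgood : ∀ k ≤ l, Good G s t (f k) := by
    intro k
    induction k with
    | zero =>
      intro _
      rw [h0, hVsEq]
      exact good_init hst hreach hall p hlen
    | succ k ih =>
      intro hk
      exact preserve hst hreach hall hlayer (ih (by omega)) (hpaths k (by omega))
        (hpaths (k + 1) hk) (hsteps k (by omega))
  have hV' : Good G s t V' := hl ▸ hgood l le_rfl
  exact ⟨⟨hV'.1, good_inl_s hst hreach hall hV', good_inl_t hst hreach hall hV'⟩, hV'.2⟩

end Stmt15
end

section
/- Let G be a simple graph, let i ≥ 1 be an integer, and let V_s and V_t be maximum independent sets of G (so |V_s| = |V_t| = α(G)). Construct G' by adding to G two new disjoint vertex sets L and R with |L| = i and |R| = 1, together with all edges between each vertex of L and each vertex of V(G) ∪ R. Let V'_s = V_s ∪ L ∪ R and V'_t = V_t ∪ L ∪ R, and let j = |V_s| + 1. Then there is a sequence of TJ steps transforming V_s into V_t in G in which every intermediate vertex subset is an independent set of G of size |V_s|, if and only if there is a sequence of TJ steps transforming V'_s into V'_t in G' in which every intermediate vertex subset induces an (i,j)-biclique in G'. -/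
namespace Stmt17

/-- The vertex type of `G'`: the vertices of `G` plus the new vertex sets
`L = Fin i` and `R = Fin 1`. -/
abbrev Wt (V : Type*) (i : ℕ) := V ⊕ (Fin i ⊕ Fin 1)

variable {V : Type*}

/-- `S` is an independent set of `G`. -/
def Indep (G : SimpleGraph V) (S : Set V) : Prop :=
  ∀ u ∈ S, ∀ v ∈ S, ¬ G.Adj u v

/-- The graph `G'`, obtained from `G` by adding the vertex sets `L` (of size `i`) and
`R` (of size `1`), together with all edges between each vertex of `L` and each vertex
of `V(G) ∪ R`. -/
def newG (G : SimpleGraph V) (i : ℕ) : SimpleGraph (Wt V i) :=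
  SimpleGraph.fromEdgeSet
    (Sym2.map Sum.inl '' G.edgeSet ∪
      {e | ∃ (a : Fin i) (u : V), e = s(Sum.inr (Sum.inl a), Sum.inl u)} ∪
      {e | ∃ (a : Fin i) (r : Fin 1), e = s(Sum.inr (Sum.inl a), Sum.inr (Sum.inr r))})

/-- `V'` induces an `(i,j)`-biclique in `G`: the induced subgraph `G[V']` is a complete
bipartite graph with parts of sizes `i` and `j`. -/
def InducesBiclique {α : Type*} (G : SimpleGraph α) (i j : ℕ) (V' : Set α) : Prop :=
  ∃ A B : Set α, Disjoint A B ∧ A ∪ B = V' ∧ A.ncard = i ∧ B.ncard = j ∧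
    (∀ a ∈ A, ∀ b ∈ B, G.Adj a b) ∧
    (∀ a ∈ A, ∀ a' ∈ A, ¬ G.Adj a a') ∧
    (∀ b ∈ B, ∀ b' ∈ B, ¬ G.Adj b b')

/-- A single token-jumping (TJ) step on vertex subsets. -/
def TJStepV {α : Type*} (V1 V2 : Set α) : Prop :=
  ∃ u v, u ∈ V1 ∧ v ∉ V1 ∧ V2 = (V1 \ {u}) ∪ {v}

/-- There is a sequence of TJ steps from `Ws` to `Wt` in which every vertex subset
satisfies the property `P`. -/
def TJReachV {α : Type*} (P : Set α → Prop) (Ws Wt : Set α) : Prop :=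
  ∃ (l : ℕ) (f : ℕ → Set α), f 0 = Ws ∧ f l = Wt ∧
    (∀ k ≤ l, P (f k)) ∧ ∀ k < l, TJStepV (f k) (f (k + 1))

/-!
A sequence of independent sets `S_k` of `G` lifts to the sets `S_k ∪ L ∪ R`, each an
`(i, |S_k| + 1)`-biclique of `G'` with parts `L` and `S_k ∪ R`. Conversely, let `W` be an
`(i, α + 1)`-biclique of `G'`. Its two parts cannot both meet `V(G)`: `L` is complete to `V(G)`
and `R` has no neighbour there, so the part of size `α + 1` would be an independent set of `G`.
Hence `W ∩ V(G)` is independent, of size at most `α`, and counting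
`i + α + 1 = |W| ≤ |W ∩ V(G)| + |L| + |R|` forces `W = (W ∩ V(G)) ∪ L ∪ R` with
`|W ∩ V(G)| = α`. A TJ step between two sets of this form moves a token inside `V(G)`.
-/

section NewGraph

variable {G : SimpleGraph V} {i : ℕ}

@[simp]
lemma newG_adj_inl_inl {u v : V} : (newG G i).Adj (Sum.inl u) (Sum.inl v) ↔ G.Adj u v := by
  rw [newG, SimpleGraph.fromEdgeSet_adj, ← Sym2.map_mk, Set.mem_union, Set.mem_union,
    (Sym2.map.injective Sum.inl_injective).mem_set_image]
  simpa using SimpleGraph.Adj.ne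

@[simp]
lemma newG_adj_L_inl {a : Fin i} {u : V} : (newG G i).Adj (Sum.inr (Sum.inl a)) (Sum.inl u) := by
  simp [newG, Sym2.exists]

@[simp]
lemma newG_adj_L_R {a : Fin i} {r : Fin 1} :
    (newG G i).Adj (Sum.inr (Sum.inl a)) (Sum.inr (Sum.inr r)) := by
  simp [newG, Sym2.exists, Fin.fin_one_eq_zero]

@[simp]
lemma newG_not_adj_L_L {a b : Fin i} :
    ¬ (newG G i).Adj (Sum.inr (Sum.inl a)) (Sum.inr (Sum.inl b)) := by
  simp [newG, Sym2.exists]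

@[simp]
lemma newG_not_adj_inl_R {u : V} {r : Fin 1} :
    ¬ (newG G i).Adj (Sum.inl u) (Sum.inr (Sum.inr r)) := by
  simp [newG, Sym2.exists]

@[simp]
lemma newG_not_adj_R_inl {u : V} {r : Fin 1} :
    ¬ (newG G i).Adj (Sum.inr (Sum.inr r)) (Sum.inl u) :=
  fun h => newG_not_adj_inl_R h.symm

end NewGraph

lemma TJReachV.map {α β : Type*} {P : Set α → Prop} {Q : Set β → Prop} (φ : Set α → Set β)
    (hPQ : ∀ U, P U → Q (φ U))
    (hstep : ∀ U U', P U → P U' → TJStepV U U' → TJStepV (φ U) (φ U')) {s t : Set α} :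
    TJReachV P s t → TJReachV Q (φ s) (φ t) := by
  rintro ⟨l, f, rfl, rfl, hP, hf⟩
  exact ⟨l, φ ∘ f, rfl, rfl, fun k hk => hPQ _ (hP k hk),
    fun k hk => hstep _ _ (hP k hk.le) (hP (k + 1) hk) (hf k hk)⟩

/-- The set `V'_s = V_s ∪ L ∪ R` of the paper, for `S = V_s`. -/
def augment (i : ℕ) (S : Set V) : Set (Wt V i) := Sum.inl '' S ∪ Set.range Sum.inr

section Augment

variable {i : ℕ}

@[simp]
lemma inl_mem_augment {S : Set V} {u : V} : Sum.inl u ∈ augment i S ↔ u ∈ S := by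
  simp [augment]

@[simp]
lemma inr_mem_augment {S : Set V} {y : Fin i ⊕ Fin 1} : Sum.inr y ∈ augment i S := by
  simp [augment]

@[simp]
lemma preimage_inl_augment (S : Set V) : Sum.inl ⁻¹' augment i S = S := by
  ext; simp

lemma subset_augment_preimage_inl (W : Set (Wt V i)) : W ⊆ augment i (Sum.inl ⁻¹' W) := by
  rintro (u | y) hw
  · exact Or.inl ⟨u, hw, rfl⟩
  · exact Or.inr ⟨y, rfl⟩

lemma ncard_augment {S : Set V} (hS : S.Finite) : (augment i S).ncard = S.ncard + (i + 1) := by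
  rw [augment, Set.ncard_union_eq (by simp [Set.disjoint_left]) (hS.image _),
    Set.ncard_image_of_injective _ Sum.inl_injective,
    Set.ncard_range_of_injective Sum.inr_injective]
  simp

lemma tjStepV_augment_iff {S T : Set V} :
    TJStepV (augment i S) (augment i T) ↔ TJStepV S T := by
  constructor
  · rintro ⟨u, v, hu, hv, hT⟩
    obtain ⟨v, rfl⟩ : ∃ v', v = Sum.inl v' := by
      rcases v with v | y
      · exact ⟨v, rfl⟩
      · simp at hv
    obtain ⟨u, rfl⟩ : ∃ u', u = Sum.inl u' := by
      rcases u with u | y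
      · exact ⟨u, rfl⟩
      · have : Sum.inr y ∈ augment i T := inr_mem_augment
        simp [hT] at this
    refine ⟨u, v, by simpa using hu, by simpa using hv, ?_⟩
    rw [← preimage_inl_augment (i := i) T, hT]
    ext; simp
  · rintro ⟨u, v, hu, hv, rfl⟩
    refine ⟨Sum.inl u, Sum.inl v, by simpa using hu, by simpa using hv, ?_⟩
    ext (w | y) <;> simp

end Augment

section Biclique

variable {G : SimpleGraph V} {i n : ℕ}

lemma inducesBiclique_augment [Finite V] {S : Set V} (hS : Indep G S) :
    InducesBiclique (newG G i) i (S.ncard + 1) (augment i S) := by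
  refine ⟨Set.range (Sum.inr ∘ Sum.inl), Sum.inl '' S ∪ {Sum.inr (Sum.inr 0)},
    by simp [Set.disjoint_left], ?_, ?_, ?_, ?_, ?_, ?_⟩
  · ext (u | a | r) <;> simp [augment, Fin.fin_one_eq_zero]
  · rw [Set.ncard_range_of_injective (Sum.inr_injective.comp Sum.inl_injective)]
    simp
  · rw [Set.union_singleton, Set.ncard_insert_of_notMem (by simp),
      Set.ncard_image_of_injective _ Sum.inl_injective]
  · rintro _ ⟨a, rfl⟩ _ (⟨u, -, rfl⟩ | rfl) <;> simp
  · rintro _ ⟨a, rfl⟩ _ ⟨b, rfl⟩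
    simp
  · rintro _ (⟨u, hu, rfl⟩ | rfl) _ (⟨v, hv, rfl⟩ | rfl)
    · simpa using hS u hu v hv
    all_goals simp

lemma indep_preimage_inl_of_inducesBiclique (hmax : ∀ S, Indep G S → S.ncard ≤ n)
    {W : Set (Wt V i)} (hW : InducesBiclique (newG G i) i (n + 1) W) :
    Indep G (Sum.inl ⁻¹' W) := by
  obtain ⟨A, B, -, rfl, -, hB, hAB, hAA, hBB⟩ := hW
  have hA' : Indep G (Sum.inl ⁻¹' A) := fun u hu v hv h => hAA _ hu _ hv (by simpa)
  have hB' : Indep G (Sum.inl ⁻¹' B) := fun u hu v hv h => hBB _ hu _ hv (by simpa)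
  rcases (Sum.inl ⁻¹' A).eq_empty_or_nonempty with hA0 | ⟨u, hu⟩
  · simpa [hA0] using hB'
  rcases (Sum.inl ⁻¹' B).eq_empty_or_nonempty with hB0 | ⟨v, hv⟩
  · simpa [hB0] using hA'
  exfalso
  have hBinl : B ⊆ Set.range Sum.inl := by
    rintro (w | a | r) hw
    · exact ⟨w, rfl⟩
    · exact absurd (hBB _ hw _ hv) (by simp)
    · exact absurd (hAB _ hu _ hw) (by simp)
  have hcard : (Sum.inl ⁻¹' B).ncard = n + 1 := by
    rw [← hB, ← Set.ncard_image_of_injective _ Sum.inl_injective,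
      Set.image_preimage_eq_of_subset hBinl]
  have := hmax _ hB'
  omega

lemma eq_augment_of_inducesBiclique [Finite V] (hmax : ∀ S, Indep G S → S.ncard ≤ n)
    {W : Set (Wt V i)} (hW : InducesBiclique (newG G i) i (n + 1) W) :
    W = augment i (Sum.inl ⁻¹' W) ∧ (Sum.inl ⁻¹' W).ncard = n := by
  have hle := hmax _ (indep_preimage_inl_of_inducesBiclique hmax hW)
  have hcard : W.ncard = i + (n + 1) := by
    obtain ⟨A, B, hAB, rfl, hA, hB, -⟩ := hW
    rw [Set.ncard_union_eq hAB, hA, hB]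
  have hcard' := ncard_augment (i := i) (Set.toFinite (Sum.inl ⁻¹' W))
  have hWeq := Set.eq_of_subset_of_ncard_le (subset_augment_preimage_inl W) (by omega)
  rw [← hWeq] at hcard'
  exact ⟨hWeq, by omega⟩

end Biclique

theorem stmt17_general [Fintype V] (G : SimpleGraph V) (i : ℕ)
    (Vs Vt : Set V)
    (hVsMax : ∀ S : Set V, Indep G S → S.ncard ≤ Vs.ncard) :
    TJReachV (fun S => Indep G S ∧ S.ncard = Vs.ncard) Vs Vt ↔
      TJReachV (fun U => InducesBiclique (newG G i) i (Vs.ncard + 1) U)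
        (Sum.inl '' Vs ∪ Set.range Sum.inr) (Sum.inl '' Vt ∪ Set.range Sum.inr) := by
  change _ ↔ TJReachV _ (augment i Vs) (augment i Vt)
  constructor
  · refine TJReachV.map (augment i) ?_ fun _ _ _ _ => tjStepV_augment_iff.mpr
    rintro S ⟨hS, hcard⟩
    exact hcard ▸ inducesBiclique_augment hS
  · intro h
    simpa using h.map (Sum.inl ⁻¹' ·)
      (fun W hW => ⟨indep_preimage_inl_of_inducesBiclique hVsMax hW,
        (eq_augment_of_inducesBiclique hVsMax hW).2⟩)
      fun W W' hW hW' hstep => by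
        rwa [(eq_augment_of_inducesBiclique hVsMax hW).1,
          (eq_augment_of_inducesBiclique hVsMax hW').1, tjStepV_augment_iff] at hstep

theorem stmt17 [Fintype V] [DecidableEq V] (G : SimpleGraph V) (i : ℕ) (hi : 1 ≤ i)
    (Vs Vt : Set V) (hVs : Indep G Vs) (hVt : Indep G Vt)
    (hVsMax : ∀ S : Set V, Indep G S → S.ncard ≤ Vs.ncard)
    (hVtMax : ∀ S : Set V, Indep G S → S.ncard ≤ Vt.ncard) :
    TJReachV (fun S => Indep G S ∧ S.ncard = Vs.ncard) Vs Vt ↔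
      TJReachV (fun U => InducesBiclique (newG G i) i (Vs.ncard + 1) U)
        (Sum.inl '' Vs ∪ Set.range Sum.inr) (Sum.inl '' Vt ∪ Set.range Sum.inr) :=
  stmt17_general G i Vs Vt hVsMax

end Stmt17
end
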